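/- arXiv:1212.1725 — 11 statements merged into one kernel-verified Lean document; each statement's English description precedes it below -/
import Mathlib

section
/- Let V : ℝ³ → ℝ be differentiable and let c ∈ ℝ be such that y₁·∂V/∂y₂(y) − y₂·∂V/∂y₁(y) = c for all y ∈ ℝ³. If x : ℝ → ℝ³ is twice differentiable and satisfies ẍ(t) = −∇V(x(t)) for all t, then the function t ↦ x₁(t)·ẋ₂(t) − x₂(t)·ẋ₁(t) + c·t is constant on ℝ. (This is the Noether first integral associated with the rotational Killing vector ∂_θ for a potential of the form V = c·θ + f(r, x₃) in cylindrical coordinates.) -/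
theorem HasDerivAt.piLp_apply {ι : Type*} [Fintype ι] {p : ENNReal} [Fact (1 ≤ p)]
    {f : ℝ → PiLp p (fun _ : ι => ℝ)} {f' : PiLp p (fun _ : ι => ℝ)} {t : ℝ}
    (hf : HasDerivAt f f' t) (i : ι) : HasDerivAt (fun r => f r i) (f' i) t :=
  (PiLp.hasFDerivAt_apply (𝕜 := ℝ) p (f t) i).comp_hasDerivAt t hf

theorem hasDerivAt_angularMomentum {ι : Type*} [Fintype ι]
    {x x' x'' : ℝ → EuclideanSpace ℝ ι} {t : ℝ}
    (hx : HasDerivAt x (x' t) t) (hx' : HasDerivAt x' (x'' t) t) (i j : ι) :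
    HasDerivAt (fun r => x r i * x' r j - x r j * x' r i)
      (x t i * x'' t j - x t j * x'' t i) t := by
  refine (((hx.piLp_apply i).mul (hx'.piLp_apply j)).sub
    ((hx.piLp_apply j).mul (hx'.piLp_apply i))).congr_deriv ?_
  -- the velocity terms `ẋᵢ ẋⱼ - ẋⱼ ẋᵢ` cancel
  ring

theorem hasDerivAt_angularMomentum_of_newton {ι : Type*} [Fintype ι]
    {V : EuclideanSpace ℝ ι → ℝ} {x x' x'' : ℝ → EuclideanSpace ℝ ι} {t : ℝ}
    (hx : HasDerivAt x (x' t) t) (hx' : HasDerivAt x' (x'' t) t)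
    (heq : x'' t = -gradient V (x t)) (i j : ι) :
    HasDerivAt (fun r => x r i * x' r j - x r j * x' r i)
      (-(x t i * gradient V (x t) j - x t j * gradient V (x t) i)) t := by
  refine (hasDerivAt_angularMomentum hx hx' i j).congr_deriv ?_
  simp only [heq, PiLp.neg_apply]
  ring

theorem noether_integral_rotational_general
    (V : EuclideanSpace ℝ (Fin 3) → ℝ) (c : ℝ)
    (hrot : ∀ y : EuclideanSpace ℝ (Fin 3),
      y 0 * gradient V y 1 - y 1 * gradient V y 0 = c)
    (x x' x'' : ℝ → EuclideanSpace ℝ (Fin 3))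
    (hx : ∀ t : ℝ, HasDerivAt x (x' t) t)
    (hx' : ∀ t : ℝ, HasDerivAt x' (x'' t) t)
    (heq : ∀ t : ℝ, x'' t = -gradient V (x t)) :
    ∀ s t : ℝ,
      x s 0 * x' s 1 - x s 1 * x' s 0 + c * s =
      x t 0 * x' t 1 - x t 1 * x' t 0 + c * t := by
  have hderiv : ∀ u : ℝ,
      HasDerivAt (fun r => x r 0 * x' r 1 - x r 1 * x' r 0 + c * r) 0 u := fun u => by
    have h := (hasDerivAt_angularMomentum_of_newton (hx u) (hx' u) (heq u) 0 1).add
      ((hasDerivAt_id u).const_mul c)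
    rwa [hrot, mul_one, neg_add_cancel] at h
  exact is_const_of_deriv_eq_zero (fun u => (hderiv u).differentiableAt)
    (fun u => (hderiv u).deriv)

/-- For a Newtonian system `ẍ = −∇V(x)` in ℝ³ whose potential satisfies
`y₁·∂V/∂y₂ − y₂·∂V/∂y₁ = c` everywhere, the Noether integral
`x₁ẋ₂ − x₂ẋ₁ + c·t` (angular momentum about the x₃-axis, shifted by `c·t`) is constant. -/
theorem noether_integral_rotational
    (V : EuclideanSpace ℝ (Fin 3) → ℝ) (hV : Differentiable ℝ V) (c : ℝ)
    (hrot : ∀ y : EuclideanSpace ℝ (Fin 3),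
      y 0 * gradient V y 1 - y 1 * gradient V y 0 = c)
    (x x' x'' : ℝ → EuclideanSpace ℝ (Fin 3))
    (hx : ∀ t : ℝ, HasDerivAt x (x' t) t)
    (hx' : ∀ t : ℝ, HasDerivAt x' (x'' t) t)
    (heq : ∀ t : ℝ, x'' t = -gradient V (x t)) :
    ∀ s t : ℝ,
      x s 0 * x' s 1 - x s 1 * x' s 0 + c * s =
      x t 0 * x' t 1 - x t 1 * x' t 0 + c * t :=
  noether_integral_rotational_general V c hrot x x' x'' hx hx' heq
end

section
/- Let n ≥ 1, let V : ℝⁿ → ℝ be differentiable, let e ∈ ℝⁿ, ω > 0 and p ∈ ℝ be such that ⟨∇V(y), e⟩ = −ω²·⟨y, e⟩ − p for all y ∈ ℝⁿ. If x : ℝ → ℝⁿ is twice differentiable and satisfies ẍ(t) = −∇V(x(t)) for all t, then the function t ↦ e^{ωt}·( ω·⟨x(t), e⟩ − ⟨ẋ(t), e⟩ + p/ω ) is constant on ℝ. (This is the Noether first integral of Case II associated with the Noether point symmetry e^{ωt}∂_e, admitted by oscillator-type potentials V = −(ω²/2)x_μ² − p x_μ + f(x_ν, x_σ).) -/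
open Real RealInnerProductSpace

theorem HasDerivAt.inner_const {E : Type*} [NormedAddCommGroup E] [InnerProductSpace ℝ E]
    {f : ℝ → E} {f' : E} {t : ℝ} (hf : HasDerivAt f f' t) (e : E) :
    HasDerivAt (fun s => ⟪f s, e⟫) ⟪f', e⟫ t := by
  simpa using hf.inner ℝ (hasDerivAt_const t e)

/-- `w = ω u - u' + p/ω` solves `w' = -ω w` when `u'' = ω² u + p`, so `e^{ωt} w` is constant. -/
theorem exp_mul_first_integral_eq {ω p : ℝ} (hω : ω ≠ 0) {u v : ℝ → ℝ}
    (hu : ∀ t, HasDerivAt u (v t) t) (hv : ∀ t, HasDerivAt v (ω ^ 2 * u t + p) t) (s t : ℝ) :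
    exp (ω * s) * (ω * u s - v s + p / ω) = exp (ω * t) * (ω * u t - v t + p / ω) := by
  have hderiv : ∀ t, HasDerivAt (fun t => exp (ω * t) * (ω * u t - v t + p / ω)) 0 t := by
    intro t
    have hexp : HasDerivAt (fun t => exp (ω * t)) (exp (ω * t) * ω) t := by
      simpa using ((hasDerivAt_id t).const_mul ω).exp
    refine (hexp.mul ((((hu t).const_mul ω).sub (hv t)).add_const (p / ω))).congr_deriv ?_
    rw [Pi.sub_apply]
    field_simp
    ring
  exact is_const_of_deriv_eq_zero (fun t => (hderiv t).differentiableAt)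
    (fun t => (hderiv t).deriv) s t

theorem noether_integral_oscillator_general
    (n : ℕ)
    (V : EuclideanSpace ℝ (Fin n) → ℝ)
    (e : EuclideanSpace ℝ (Fin n)) (ω p : ℝ) (hω : 0 < ω)
    (hgrad : ∀ y : EuclideanSpace ℝ (Fin n),
      (inner ℝ (gradient V y) e : ℝ) = -ω ^ 2 * (inner ℝ y e : ℝ) - p)
    (x x' x'' : ℝ → EuclideanSpace ℝ (Fin n))
    (hx : ∀ t : ℝ, HasDerivAt x (x' t) t)
    (hx' : ∀ t : ℝ, HasDerivAt x' (x'' t) t)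
    (heq : ∀ t : ℝ, x'' t = -gradient V (x t)) :
    ∀ s t : ℝ,
      Real.exp (ω * s) * (ω * (inner ℝ (x s) e : ℝ) - (inner ℝ (x' s) e : ℝ) + p / ω) =
      Real.exp (ω * t) * (ω * (inner ℝ (x t) e : ℝ) - (inner ℝ (x' t) e : ℝ) + p / ω) := by
  have hacc : ∀ t, ⟪x'' t, e⟫ = ω ^ 2 * ⟪x t, e⟫ + p := fun t => by
    rw [heq t, inner_neg_left, hgrad (x t)]
    ring
  refine exp_mul_first_integral_eq hω.ne' (fun t => (hx t).inner_const e) fun t => ?_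
  simpa only [hacc] using (hx' t).inner_const e

/-- Case II Noether integral for the point symmetry `e^{ωt}∂_e` admitted by
oscillator-type potentials: if `⟨∇V(y), e⟩ = −ω²⟨y, e⟩ − p` for all `y` (with `ω > 0`),
then along any solution of `ẍ = −∇V(x)` the quantity
`e^{ωt}·(ω⟨x, e⟩ − ⟨ẋ, e⟩ + p/ω)` is constant. -/
theorem noether_integral_oscillator
    (n : ℕ) (hn : 1 ≤ n)
    (V : EuclideanSpace ℝ (Fin n) → ℝ) (hV : Differentiable ℝ V)
    (e : EuclideanSpace ℝ (Fin n)) (ω p : ℝ) (hω : 0 < ω)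
    (hgrad : ∀ y : EuclideanSpace ℝ (Fin n),
      (inner ℝ (gradient V y) e : ℝ) = -ω ^ 2 * (inner ℝ y e : ℝ) - p)
    (x x' x'' : ℝ → EuclideanSpace ℝ (Fin n))
    (hx : ∀ t : ℝ, HasDerivAt x (x' t) t)
    (hx' : ∀ t : ℝ, HasDerivAt x' (x'' t) t)
    (heq : ∀ t : ℝ, x'' t = -gradient V (x t)) :
    ∀ s t : ℝ,
      Real.exp (ω * s) * (ω * (inner ℝ (x s) e : ℝ) - (inner ℝ (x' s) e : ℝ) + p / ω) =
      Real.exp (ω * t) * (ω * (inner ℝ (x t) e : ℝ) - (inner ℝ (x' t) e : ℝ) + p / ω) :=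
  noether_integral_oscillator_general n V e ω p hω hgrad x x' x'' hx hx' heq
end

section
/- Let n ≥ 1, let V : ℝⁿ → ℝ be differentiable and let ω > 0 be such that ⟨y, ∇V(y)⟩ + 2·V(y) + (ω²/2)·|y|² = 0 for all y ∈ ℝⁿ. If x : ℝ → ℝⁿ is twice differentiable and satisfies ẍ(t) = −∇V(x(t)) for all t, then the function t ↦ e^{ωt}·( (2/ω)·E(t) − ⟨x(t), ẋ(t)⟩ + (ω/2)·|x(t)|² ) is constant on ℝ, where E(t) = ½|ẋ(t)|² + V(x(t)). (This is the Noether first integral of Case II, I = 2ψ_Y ∫T dt·E − g_{ij}H^{,i}ẋ^j + T_{,t}H, generated by the gradient homothetic vector with gradient function H = ½|x|² and T(t) = e^{ωt}.) -/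
/-!
Along a solution of `ẍ = -∇V(x)` the energy `E` is conserved and the virial identity
`d/dt ⟪x, ẋ⟫ = ‖ẋ‖² - ⟪x, ∇V(x)⟫` holds. The homogeneity condition on `V` turns the latter into
`d/dt ⟪x, ẋ⟫ = 2E + (ω²/2)‖x‖²`, so `F = (2/ω)E - ⟪x, ẋ⟫ + (ω/2)‖x‖²` solves `F' = -ωF`,
and `e^{ωt} F(t)` is constant.
-/

open Real InnerProductSpace Gradient

theorem exp_mul_eq_of_hasDerivAt_eq_neg_mul {f : ℝ → ℝ} {ω : ℝ}
    (hf : ∀ t, HasDerivAt f (-ω * f t) t) (s t : ℝ) :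
    exp (ω * s) * f s = exp (ω * t) * f t := by
  have hderiv : ∀ u, HasDerivAt (fun t => exp (ω * t) * f t) 0 u := fun u => by
    have hexp : HasDerivAt (fun t => exp (ω * t)) (exp (ω * u) * ω) u :=
      ((hasDerivAt_id u).const_mul ω).exp.congr_deriv (by simp)
    exact (hexp.mul (hf u)).congr_deriv (by ring)
  exact is_const_of_deriv_eq_zero (fun u => (hderiv u).differentiableAt)
    (fun u => (hderiv u).deriv) s t

section Newtonian

variable {F : Type*} [NormedAddCommGroup F] [InnerProductSpace ℝ F] [CompleteSpace F]
  {V : F → ℝ} {x x' x'' : ℝ → F} {t : ℝ}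

theorem hasDerivAt_energy (hV : DifferentiableAt ℝ V (x t))
    (hx : HasDerivAt x (x' t) t) (hx' : HasDerivAt x' (x'' t) t)
    (heq : x'' t = -∇ V (x t)) :
    HasDerivAt (fun t => 1 / 2 * ‖x' t‖ ^ 2 + V (x t)) 0 t := by
  have hVx : HasDerivAt (fun t => V (x t)) ⟪∇ V (x t), x' t⟫_ℝ t :=
    hV.hasGradientAt.hasFDerivAt.comp_hasDerivAt t hx
  refine ((hx'.norm_sq.const_mul (1 / 2)).add hVx).congr_deriv ?_
  rw [heq, inner_neg_right, real_inner_comm]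
  ring

theorem hasDerivAt_virial (hx : HasDerivAt x (x' t) t)
    (hx' : HasDerivAt x' (x'' t) t) (heq : x'' t = -∇ V (x t)) :
    HasDerivAt (fun t => ⟪x t, x' t⟫_ℝ) (‖x' t‖ ^ 2 - ⟪x t, ∇ V (x t)⟫_ℝ) t := by
  refine (hx.inner ℝ hx').congr_deriv ?_
  rw [heq, inner_neg_right, real_inner_self_eq_norm_sq]
  ring

end Newtonian

theorem noether_integral_gradient_homothetic_general
    (n : ℕ)
    (V : EuclideanSpace ℝ (Fin n) → ℝ) (hV : Differentiable ℝ V)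
    (ω : ℝ) (hω : 0 < ω)
    (hhom : ∀ y : EuclideanSpace ℝ (Fin n),
      (inner ℝ y (gradient V y) : ℝ) + 2 * V y + (ω ^ 2 / 2) * ‖y‖ ^ 2 = 0)
    (x x' x'' : ℝ → EuclideanSpace ℝ (Fin n))
    (hx : ∀ t : ℝ, HasDerivAt x (x' t) t)
    (hx' : ∀ t : ℝ, HasDerivAt x' (x'' t) t)
    (heq : ∀ t : ℝ, x'' t = -gradient V (x t))
    (E : ℝ → ℝ)
    (hE : ∀ t : ℝ, E t = (1 / 2) * ‖x' t‖ ^ 2 + V (x t)) :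
    ∀ s t : ℝ,
      Real.exp (ω * s) *
          ((2 / ω) * E s - (inner ℝ (x s) (x' s) : ℝ) + (ω / 2) * ‖x s‖ ^ 2) =
      Real.exp (ω * t) *
          ((2 / ω) * E t - (inner ℝ (x t) (x' t) : ℝ) + (ω / 2) * ‖x t‖ ^ 2) := by
  refine exp_mul_eq_of_hasDerivAt_eq_neg_mul fun t => ?_
  have hE' : HasDerivAt E 0 t := by
    rw [funext hE]
    exact hasDerivAt_energy (hV _) (hx t) (hx' t) (heq t)
  refine (((hE'.const_mul (2 / ω)).sub (hasDerivAt_virial (hx t) (hx' t) (heq t))).add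
    ((hx t).norm_sq.const_mul (ω / 2))).congr_deriv ?_
  have hω_inv : ω * (2 / ω) = 2 := by field_simp
  rw [hE t]
  linear_combination hhom (x t) + (1 / 2 * ‖x' t‖ ^ 2 + V (x t)) * hω_inv

/-- Case II Noether integral generated by the gradient homothetic vector with
gradient function `H = ½|x|²` and `T(t) = e^{ωt}`: if
`⟨y, ∇V(y)⟩ + 2V(y) + (ω²/2)|y|² = 0` for all `y` (with `ω > 0`), then along any solution
of `ẍ = −∇V(x)` the quantity `e^{ωt}·((2/ω)E − ⟨x, ẋ⟩ + (ω/2)|x|²)` is constant,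
where `E = ½|ẋ|² + V(x)`. -/
theorem noether_integral_gradient_homothetic
    (n : ℕ) (hn : 1 ≤ n)
    (V : EuclideanSpace ℝ (Fin n) → ℝ) (hV : Differentiable ℝ V)
    (ω : ℝ) (hω : 0 < ω)
    (hhom : ∀ y : EuclideanSpace ℝ (Fin n),
      (inner ℝ y (gradient V y) : ℝ) + 2 * V y + (ω ^ 2 / 2) * ‖y‖ ^ 2 = 0)
    (x x' x'' : ℝ → EuclideanSpace ℝ (Fin n))
    (hx : ∀ t : ℝ, HasDerivAt x (x' t) t)
    (hx' : ∀ t : ℝ, HasDerivAt x' (x'' t) t)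
    (heq : ∀ t : ℝ, x'' t = -gradient V (x t))
    (E : ℝ → ℝ)
    (hE : ∀ t : ℝ, E t = (1 / 2) * ‖x' t‖ ^ 2 + V (x t)) :
    ∀ s t : ℝ,
      Real.exp (ω * s) *
          ((2 / ω) * E s - (inner ℝ (x s) (x' s) : ℝ) + (ω / 2) * ‖x s‖ ^ 2) =
      Real.exp (ω * t) *
          ((2 / ω) * E t - (inner ℝ (x t) (x' t) : ℝ) + (ω / 2) * ‖x t‖ ^ 2) :=
  noether_integral_gradient_homothetic_general n V hV ω hω hhom x x' x'' hx hx' heq E hE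
end

section
/- Suppose the potential of motion on the 2-sphere has the form V(θ, φ) = F(cos θ · sin φ) for some differentiable function F : ℝ → ℝ. Then along any solution (φ(t), θ(t)) of the equations of motion on an interval where sin φ(t) ≠ 0, the quantity I¹(t) = φ̇(t)·sin θ(t) + θ̇(t)·cos θ(t)·sin φ(t)·cos φ(t) is constant. (This is the Noether integral I_{CK¹} of Table 7.) -/
open Real

/-! The potential `F (cos θ sin φ)` is invariant under the rotation of the sphere whose Killing
field is `X = sin θ ∂_φ + cot φ cos θ ∂_θ`, and `I¹` is the momentum conjugate to `X`. Along the
equations of motion, `d I¹ / dt = -(sin θ sin φ ∂V/∂φ + cos θ cos φ ∂V/∂θ) / sin φ = -X V`,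
which vanishes. -/

noncomputable def noetherI1 (φ θ φ' θ' : ℝ → ℝ) (t : ℝ) : ℝ :=
  φ' t * sin (θ t) + θ' t * cos (θ t) * sin (φ t) * cos (φ t)

theorem hasDerivAt_noetherI1 {φ θ φ' θ' : ℝ → ℝ} {φ'' θ'' t : ℝ}
    (hφ : HasDerivAt φ (φ' t) t) (hφ' : HasDerivAt φ' φ'' t)
    (hθ : HasDerivAt θ (θ' t) t) (hθ' : HasDerivAt θ' θ'' t) :
    HasDerivAt (noetherI1 φ θ φ' θ')
      (φ'' * sin (θ t) + φ' t * θ' t * cos (θ t)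
        + θ'' * cos (θ t) * sin (φ t) * cos (φ t)
        - θ' t ^ 2 * sin (θ t) * sin (φ t) * cos (φ t)
        + θ' t * φ' t * cos (θ t) * (cos (φ t) ^ 2 - sin (φ t) ^ 2)) t := by
  have h : HasDerivAt (noetherI1 φ θ φ' θ') _ t :=
    (hφ'.mul hθ.sin).add (((hθ'.mul hθ.cos).mul hφ.sin).mul hφ.cos)
  convert h using 1
  simp only [Pi.mul_apply]
  ring

theorem fderiv_comp_cos_mul_sin {F : ℝ → ℝ} {a b : ℝ}
    (hF : DifferentiableAt ℝ F (cos a * sin b)) (u v : ℝ) :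
    fderiv ℝ (fun p : ℝ × ℝ => F (cos p.1 * sin p.2)) (a, b) (u, v) =
      deriv F (cos a * sin b) * (-sin a * sin b * u + cos a * cos b * v) := by
  have h : HasFDerivAt (fun p : ℝ × ℝ => F (cos p.1 * sin p.2)) _ (a, b) :=
    hF.hasDerivAt.comp_hasFDerivAt (a, b) (hasFDerivAt_fst.cos.mul hasFDerivAt_snd.sin)
  rw [h.fderiv]
  simp only [smul_apply, add_apply, smul_eq_mul,
    ContinuousLinearMap.coe_fst', ContinuousLinearMap.coe_snd']
  ring

theorem comp_cos_mul_sin_rotation_invariant {F : ℝ → ℝ} {a b : ℝ}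
    (hF : DifferentiableAt ℝ F (cos a * sin b)) :
    sin a * sin b * fderiv ℝ (fun p : ℝ × ℝ => F (cos p.1 * sin p.2)) (a, b) (0, 1)
      + cos a * cos b * fderiv ℝ (fun p : ℝ × ℝ => F (cos p.1 * sin p.2)) (a, b) (1, 0) = 0 := by
  rw [fderiv_comp_cos_mul_sin hF, fderiv_comp_cos_mul_sin hF]
  ring

theorem noetherI1_deriv_eq_zero {θ φ θ' φ' θ'' φ'' Vθ Vφ : ℝ} (hsin : sin φ ≠ 0)
    (eomφ : φ'' - sin φ * cos φ * θ' ^ 2 + Vφ = 0)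
    (eomθ : θ'' + 2 * (cos φ / sin φ) * θ' * φ' + (1 / sin φ ^ 2) * Vθ = 0)
    (hinv : sin θ * sin φ * Vφ + cos θ * cos φ * Vθ = 0) :
    φ'' * sin θ + φ' * θ' * cos θ + θ'' * cos θ * sin φ * cos φ
      - θ' ^ 2 * sin θ * sin φ * cos φ + θ' * φ' * cos θ * (cos φ ^ 2 - sin φ ^ 2) = 0 := by
  have hφ'' : φ'' = sin φ * cos φ * θ' ^ 2 - Vφ := by linarith
  have hθ'' : θ'' = -(2 * (cos φ / sin φ) * θ' * φ') - (1 / sin φ ^ 2) * Vθ := by linarith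
  rw [hφ'', hθ'']
  field_simp
  linear_combination -hinv - sin φ * θ' * φ' * cos θ * sin_sq_add_cos_sq φ

theorem sphere_noether_I1_general
    (V : ℝ × ℝ → ℝ)
    (F : ℝ → ℝ) (hF : Differentiable ℝ F)
    (hform : ∀ p : ℝ × ℝ, V p = F (cos p.1 * sin p.2))
    (t₀ t₁ : ℝ) (φ θ φ' θ' φ'' θ'' : ℝ → ℝ)
    (hφ : ∀ t ∈ Set.Ioo t₀ t₁, HasDerivAt φ (φ' t) t)
    (hφ' : ∀ t ∈ Set.Ioo t₀ t₁, HasDerivAt φ' (φ'' t) t)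
    (hθ : ∀ t ∈ Set.Ioo t₀ t₁, HasDerivAt θ (θ' t) t)
    (hθ' : ∀ t ∈ Set.Ioo t₀ t₁, HasDerivAt θ' (θ'' t) t)
    (hsin : ∀ t ∈ Set.Ioo t₀ t₁, sin (φ t) ≠ 0)
    (eomφ : ∀ t ∈ Set.Ioo t₀ t₁,
      φ'' t - sin (φ t) * cos (φ t) * (θ' t) ^ 2
        + fderiv ℝ V (θ t, φ t) (0, 1) = 0)
    (eomθ : ∀ t ∈ Set.Ioo t₀ t₁,
      θ'' t + 2 * (cos (φ t) / sin (φ t)) * θ' t * φ' t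
        + (1 / sin (φ t) ^ 2) * fderiv ℝ V (θ t, φ t) (1, 0) = 0) :
    ∀ s ∈ Set.Ioo t₀ t₁, ∀ t ∈ Set.Ioo t₀ t₁,
      φ' s * sin (θ s) + θ' s * cos (θ s) * sin (φ s) * cos (φ s) =
      φ' t * sin (θ t) + θ' t * cos (θ t) * sin (φ t) * cos (φ t) := by
  obtain rfl : V = fun p => F (cos p.1 * sin p.2) := funext hform
  have hI : ∀ t ∈ Set.Ioo t₀ t₁, HasDerivAt (noetherI1 φ θ φ' θ') 0 t := fun t ht => by
    have h := hasDerivAt_noetherI1 (hφ t ht) (hφ' t ht) (hθ t ht) (hθ' t ht)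
    rwa [noetherI1_deriv_eq_zero (hsin t ht) (eomφ t ht) (eomθ t ht)
      (comp_cos_mul_sin_rotation_invariant (hF _))] at h
  intro s hs t ht
  exact isOpen_Ioo.is_const_of_deriv_eq_zero isPreconnected_Ioo
    (fun x hx => (hI x hx).differentiableAt.differentiableWithinAt)
    (fun x hx => (hI x hx).deriv) hs ht

/-- motion on the 2-sphere with potential of the form
`V(θ, φ) = F(cos θ · sin φ)`. Along any solution on an interval where `sin φ ≠ 0`, the
Noether integral `I¹ = φ̇·sin θ + θ̇·cos θ·sin φ·cos φ` is constant. -/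
theorem sphere_noether_I1
    (V : ℝ × ℝ → ℝ) (hV : Differentiable ℝ V)
    (F : ℝ → ℝ) (hF : Differentiable ℝ F)
    (hform : ∀ p : ℝ × ℝ, V p = F (cos p.1 * sin p.2))
    (t₀ t₁ : ℝ) (φ θ φ' θ' φ'' θ'' : ℝ → ℝ)
    (hφ : ∀ t ∈ Set.Ioo t₀ t₁, HasDerivAt φ (φ' t) t)
    (hφ' : ∀ t ∈ Set.Ioo t₀ t₁, HasDerivAt φ' (φ'' t) t)
    (hθ : ∀ t ∈ Set.Ioo t₀ t₁, HasDerivAt θ (θ' t) t)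
    (hθ' : ∀ t ∈ Set.Ioo t₀ t₁, HasDerivAt θ' (θ'' t) t)
    (hsin : ∀ t ∈ Set.Ioo t₀ t₁, sin (φ t) ≠ 0)
    (eomφ : ∀ t ∈ Set.Ioo t₀ t₁,
      φ'' t - sin (φ t) * cos (φ t) * (θ' t) ^ 2
        + fderiv ℝ V (θ t, φ t) (0, 1) = 0)
    (eomθ : ∀ t ∈ Set.Ioo t₀ t₁,
      θ'' t + 2 * (cos (φ t) / sin (φ t)) * θ' t * φ' t
        + (1 / sin (φ t) ^ 2) * fderiv ℝ V (θ t, φ t) (1, 0) = 0) :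
    ∀ s ∈ Set.Ioo t₀ t₁, ∀ t ∈ Set.Ioo t₀ t₁,
      φ' s * sin (θ s) + θ' s * cos (θ s) * sin (φ s) * cos (φ s) =
      φ' t * sin (θ t) + θ' t * cos (θ t) * sin (φ t) * cos (φ t) :=
  sphere_noether_I1_general V F hF hform t₀ t₁ φ θ φ' θ' φ'' θ'' hφ hφ' hθ hθ' hsin eomφ eomθ
end

section
/- Suppose the potential of motion on the 2-sphere has the form V(θ, φ) = F(sin θ · sin φ) for some differentiable function F : ℝ → ℝ. Then along any solution (φ(t), θ(t)) of the equations of motion on an interval where sin φ(t) ≠ 0, the quantity I²(t) = φ̇(t)·cos θ(t) − θ̇(t)·sin θ(t)·sin φ(t)·cos φ(t) is constant. (This is the Noether integral I_{CK²} of Table 7.) -/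
/-!
The potential `V(θ, φ) = F(sin θ sin φ)` is invariant under the rotation of the sphere generated by
`X = cos θ ∂_φ - cot φ sin θ ∂_θ`, since `X (sin θ sin φ) = 0`, and `I²` is the Noether integral
of that symmetry: differentiating `I²` and substituting the equations of motion leaves exactly
`-(X V)`, which vanishes.
-/

open Real Set

noncomputable def noetherI2 (θ φ θ' φ' : ℝ) : ℝ :=
  φ' * cos θ - θ' * sin θ * sin φ * cos φ

theorem hasDerivAt_noetherI2 {θ φ θ' φ' : ℝ → ℝ} {θ'' φ'' t : ℝ}
    (hθ : HasDerivAt θ (θ' t) t) (hφ : HasDerivAt φ (φ' t) t)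
    (hθ' : HasDerivAt θ' θ'' t) (hφ' : HasDerivAt φ' φ'' t) :
    HasDerivAt (fun t => noetherI2 (θ t) (φ t) (θ' t) (φ' t))
      (φ'' * cos (θ t) - φ' t * θ' t * sin (θ t)
        - θ'' * sin (θ t) * sin (φ t) * cos (φ t)
        - θ' t ^ 2 * cos (θ t) * sin (φ t) * cos (φ t)
        - θ' t * φ' t * sin (θ t) * (cos (φ t) ^ 2 - sin (φ t) ^ 2)) t := by
  refine ((hφ'.fun_mul hθ.cos).fun_sub
    (((hθ'.fun_mul hθ.sin).fun_mul hφ.sin).fun_mul hφ.cos)).congr_deriv ?_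
  ring

/-- `Vθ`, `Vφ` stand for the partial derivatives of the potential, and `hX` says `X V = 0`. -/
theorem noetherI2_rate_eq_zero {θ φ θ' φ' θ'' φ'' Vθ Vφ : ℝ} (hsin : sin φ ≠ 0)
    (eomφ : φ'' - sin φ * cos φ * θ' ^ 2 + Vφ = 0)
    (eomθ : θ'' + 2 * (cos φ / sin φ) * θ' * φ' + 1 / sin φ ^ 2 * Vθ = 0)
    (hX : sin φ * cos θ * Vφ = sin θ * cos φ * Vθ) :
    φ'' * cos θ - φ' * θ' * sin θ - θ'' * sin θ * sin φ * cos φ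
      - θ' ^ 2 * cos θ * sin φ * cos φ - θ' * φ' * sin θ * (cos φ ^ 2 - sin φ ^ 2) = 0 := by
  have eomθ' : θ'' * sin φ ^ 2 + 2 * cos φ * sin φ * θ' * φ' + Vθ = 0 := by
    field_simp at eomθ
    linear_combination eomθ
  suffices sin φ * (φ'' * cos θ - φ' * θ' * sin θ - θ'' * sin θ * sin φ * cos φ
      - θ' ^ 2 * cos θ * sin φ * cos φ - θ' * φ' * sin θ * (cos φ ^ 2 - sin φ ^ 2)) = 0 from
    (mul_eq_zero.mp this).resolve_left hsin
  linear_combination sin φ * cos θ * eomφ - sin θ * cos φ * eomθ' - hX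
    + θ' * φ' * sin θ * sin φ * sin_sq_add_cos_sq φ

theorem fderiv_comp_sin_mul_sin_apply {F : ℝ → ℝ} {a b : ℝ}
    (hF : DifferentiableAt ℝ F (sin a * sin b)) (v : ℝ × ℝ) :
    fderiv ℝ (fun p : ℝ × ℝ => F (sin p.1 * sin p.2)) (a, b) v
      = deriv F (sin a * sin b) * (cos a * sin b * v.1 + sin a * cos b * v.2) := by
  have hsin₁ := (hasDerivAt_sin a).comp_hasFDerivAt (a, b) (hasFDerivAt_fst (𝕜 := ℝ))
  have hsin₂ := (hasDerivAt_sin b).comp_hasFDerivAt (a, b) (hasFDerivAt_snd (𝕜 := ℝ))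
  have hcomp : HasFDerivAt (fun p : ℝ × ℝ => F (sin p.1 * sin p.2)) _ (a, b) :=
    hF.hasDerivAt.comp_hasFDerivAt (a, b) (hsin₁.mul hsin₂)
  rw [hcomp.fderiv]
  simp only [Function.comp_apply, smul_add, add_apply, smul_apply, smul_eq_mul,
    ContinuousLinearMap.coe_fst', ContinuousLinearMap.coe_snd']
  ring

theorem sin_mul_cos_mul_fderiv_comp_sin_mul_sin {F : ℝ → ℝ} {θ φ : ℝ}
    (hF : DifferentiableAt ℝ F (sin θ * sin φ)) :
    sin φ * cos θ * fderiv ℝ (fun p : ℝ × ℝ => F (sin p.1 * sin p.2)) (θ, φ) (0, 1)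
      = sin θ * cos φ * fderiv ℝ (fun p : ℝ × ℝ => F (sin p.1 * sin p.2)) (θ, φ) (1, 0) := by
  simp only [fderiv_comp_sin_mul_sin_apply hF]
  ring

theorem sphere_noether_I2_general
    (V : ℝ × ℝ → ℝ)
    (F : ℝ → ℝ) (hF : Differentiable ℝ F)
    (hform : ∀ p : ℝ × ℝ, V p = F (sin p.1 * sin p.2))
    (t₀ t₁ : ℝ) (φ θ φ' θ' φ'' θ'' : ℝ → ℝ)
    (hφ : ∀ t ∈ Set.Ioo t₀ t₁, HasDerivAt φ (φ' t) t)
    (hφ' : ∀ t ∈ Set.Ioo t₀ t₁, HasDerivAt φ' (φ'' t) t)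
    (hθ : ∀ t ∈ Set.Ioo t₀ t₁, HasDerivAt θ (θ' t) t)
    (hθ' : ∀ t ∈ Set.Ioo t₀ t₁, HasDerivAt θ' (θ'' t) t)
    (hsin : ∀ t ∈ Set.Ioo t₀ t₁, sin (φ t) ≠ 0)
    (eomφ : ∀ t ∈ Set.Ioo t₀ t₁,
      φ'' t - sin (φ t) * cos (φ t) * (θ' t) ^ 2
        + fderiv ℝ V (θ t, φ t) (0, 1) = 0)
    (eomθ : ∀ t ∈ Set.Ioo t₀ t₁,
      θ'' t + 2 * (cos (φ t) / sin (φ t)) * θ' t * φ' t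
        + (1 / sin (φ t) ^ 2) * fderiv ℝ V (θ t, φ t) (1, 0) = 0) :
    ∀ s ∈ Set.Ioo t₀ t₁, ∀ t ∈ Set.Ioo t₀ t₁,
      φ' s * cos (θ s) - θ' s * sin (θ s) * sin (φ s) * cos (φ s) =
      φ' t * cos (θ t) - θ' t * sin (θ t) * sin (φ t) * cos (φ t) := by
  obtain rfl : V = fun p => F (sin p.1 * sin p.2) := funext hform
  have hI : ∀ t ∈ Ioo t₀ t₁, HasDerivAt (fun t => noetherI2 (θ t) (φ t) (θ' t) (φ' t)) 0 t := by
    intro t ht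
    exact (hasDerivAt_noetherI2 (hθ t ht) (hφ t ht) (hθ' t ht) (hφ' t ht)).congr_deriv
      (noetherI2_rate_eq_zero (hsin t ht) (eomφ t ht) (eomθ t ht)
        (sin_mul_cos_mul_fderiv_comp_sin_mul_sin (hF _)))
  intro s hs t ht
  exact isOpen_Ioo.is_const_of_deriv_eq_zero isPreconnected_Ioo
    (fun x hx => (hI x hx).differentiableAt.differentiableWithinAt)
    (fun x hx => (hI x hx).deriv) hs ht

/-- motion on the 2-sphere with potential of the form
`V(θ, φ) = F(sin θ · sin φ)`. Along any solution on an interval where `sin φ ≠ 0`, the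
Noether integral `I² = φ̇·cos θ − θ̇·sin θ·sin φ·cos φ` is constant. -/
theorem sphere_noether_I2
    (V : ℝ × ℝ → ℝ) (hV : Differentiable ℝ V)
    (F : ℝ → ℝ) (hF : Differentiable ℝ F)
    (hform : ∀ p : ℝ × ℝ, V p = F (sin p.1 * sin p.2))
    (t₀ t₁ : ℝ) (φ θ φ' θ' φ'' θ'' : ℝ → ℝ)
    (hφ : ∀ t ∈ Set.Ioo t₀ t₁, HasDerivAt φ (φ' t) t)
    (hφ' : ∀ t ∈ Set.Ioo t₀ t₁, HasDerivAt φ' (φ'' t) t)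
    (hθ : ∀ t ∈ Set.Ioo t₀ t₁, HasDerivAt θ (θ' t) t)
    (hθ' : ∀ t ∈ Set.Ioo t₀ t₁, HasDerivAt θ' (θ'' t) t)
    (hsin : ∀ t ∈ Set.Ioo t₀ t₁, sin (φ t) ≠ 0)
    (eomφ : ∀ t ∈ Set.Ioo t₀ t₁,
      φ'' t - sin (φ t) * cos (φ t) * (θ' t) ^ 2
        + fderiv ℝ V (θ t, φ t) (0, 1) = 0)
    (eomθ : ∀ t ∈ Set.Ioo t₀ t₁,
      θ'' t + 2 * (cos (φ t) / sin (φ t)) * θ' t * φ' t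
        + (1 / sin (φ t) ^ 2) * fderiv ℝ V (θ t, φ t) (1, 0) = 0) :
    ∀ s ∈ Set.Ioo t₀ t₁, ∀ t ∈ Set.Ioo t₀ t₁,
      φ' s * cos (θ s) - θ' s * sin (θ s) * sin (φ s) * cos (φ s) =
      φ' t * cos (θ t) - θ' t * sin (θ t) * sin (φ t) * cos (φ t) :=
  sphere_noether_I2_general V F hF hform t₀ t₁ φ θ φ' θ' φ'' θ'' hφ hφ' hθ hθ' hsin eomφ eomθ
end

section
/- Let b, c ∈ ℝ and suppose the potential of motion on the 2-sphere has the form V(θ, φ) = F(b·sin θ·sin φ + c·cos φ) for some differentiable function F : ℝ → ℝ. Then along any solution (φ(t), θ(t)) of the equations of motion on an interval where sin φ(t) ≠ 0, the quantity b·I²(t) + c·I³(t) is constant, where I² = φ̇ cos θ − θ̇ sin θ sin φ cos φ and I³ = θ̇ sin²φ. (This is the row a I_{CK²} + b I_{CK³} of Table 7.) -/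
/-!
In Cartesian coordinates `x = (sin φ cos θ, sin φ sin θ, cos φ)` the potential depends only on the
height `⟪n, x⟫ = b sin θ sin φ + c cos φ` along the axis `n = (0, b, c)`, and `b I² + c I³` is the
component `⟪n, x × ẋ⟫` of the angular momentum. Along a solution, `I²` and `I³` change at the rates
`-X² V` and `-X³ V`, where `X² = cos θ ∂_φ - sin θ cot φ ∂_θ` and `X³ = ∂_θ` generate rotations;
the rotation `b X² + c X³` about `n` kills every function of the height, so `b I² + c I³` has
derivative zero on the interval.
-/

open Real

theorem fderiv_apply_of_eq_comp_axial {b c : ℝ} {V : ℝ × ℝ → ℝ} {F : ℝ → ℝ}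
    (hF : Differentiable ℝ F)
    (hform : ∀ p : ℝ × ℝ, V p = F (b * sin p.1 * sin p.2 + c * cos p.2)) (p v : ℝ × ℝ) :
    fderiv ℝ V p v = deriv F (b * sin p.1 * sin p.2 + c * cos p.2) *
      (b * cos p.1 * sin p.2 * v.1 + (b * sin p.1 * cos p.2 - c * sin p.2) * v.2) := by
  have hV := (hF _).hasDerivAt.comp_hasFDerivAt p <|
    ((hasFDerivAt_fst.sin.const_mul b).mul hasFDerivAt_snd.sin).add
      (hasFDerivAt_snd.cos.const_mul c)
  rw [(hV.congr_of_eventuallyEq (.of_forall hform)).fderiv]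
  simp only [Pi.add_apply, Pi.mul_apply, add_apply, smul_apply, smul_eq_mul,
    ContinuousLinearMap.coe_fst', ContinuousLinearMap.coe_snd']
  ring

theorem axial_potential_rotation_invariant {b c : ℝ} {V : ℝ × ℝ → ℝ} {F : ℝ → ℝ}
    (hF : Differentiable ℝ F)
    (hform : ∀ p : ℝ × ℝ, V p = F (b * sin p.1 * sin p.2 + c * cos p.2)) {p : ℝ × ℝ}
    (hsin : sin p.2 ≠ 0) :
    b * (cos p.1 * fderiv ℝ V p (0, 1) - sin p.1 * cos p.2 / sin p.2 * fderiv ℝ V p (1, 0))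
      + c * fderiv ℝ V p (1, 0) = 0 := by
  simp only [fderiv_apply_of_eq_comp_axial hF hform]
  field_simp
  ring

section Trajectory

variable {φ θ φ' θ' φ'' θ'' : ℝ → ℝ} {t Vθ Vφ : ℝ}

theorem Vθ_eq_of_eomθ (hsin : sin (φ t) ≠ 0)
    (eomθ : θ'' t + 2 * (cos (φ t) / sin (φ t)) * θ' t * φ' t + 1 / sin (φ t) ^ 2 * Vθ = 0) :
    Vθ = -(θ'' t * sin (φ t) ^ 2 + 2 * sin (φ t) * cos (φ t) * θ' t * φ' t) := by
  field_simp at eomθ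
  linear_combination eomθ

theorem hasDerivAt_thirdIntegral (hφ : HasDerivAt φ (φ' t) t) (hθ' : HasDerivAt θ' (θ'' t) t)
    (hsin : sin (φ t) ≠ 0)
    (eomθ : θ'' t + 2 * (cos (φ t) / sin (φ t)) * θ' t * φ' t + 1 / sin (φ t) ^ 2 * Vθ = 0) :
    HasDerivAt (fun t => θ' t * sin (φ t) ^ 2) (-Vθ) t := by
  refine (hθ'.mul (hφ.sin.pow 2)).congr_deriv ?_
  rw [Vθ_eq_of_eomθ hsin eomθ]
  simp only [Pi.pow_apply]
  ring

theorem hasDerivAt_secondIntegral (hφ : HasDerivAt φ (φ' t) t) (hφ' : HasDerivAt φ' (φ'' t) t)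
    (hθ : HasDerivAt θ (θ' t) t) (hθ' : HasDerivAt θ' (θ'' t) t) (hsin : sin (φ t) ≠ 0)
    (eomφ : φ'' t - sin (φ t) * cos (φ t) * θ' t ^ 2 + Vφ = 0)
    (eomθ : θ'' t + 2 * (cos (φ t) / sin (φ t)) * θ' t * φ' t + 1 / sin (φ t) ^ 2 * Vθ = 0) :
    HasDerivAt (fun t => φ' t * cos (θ t) - θ' t * sin (θ t) * sin (φ t) * cos (φ t))
      (sin (θ t) * cos (φ t) / sin (φ t) * Vθ - cos (θ t) * Vφ) t := by
  refine ((hφ'.mul hθ.cos).sub (((hθ'.mul hθ.sin).mul hφ.sin).mul hφ.cos)).congr_deriv ?_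
  have hVφ : Vφ = sin (φ t) * cos (φ t) * θ' t ^ 2 - φ'' t := by linear_combination eomφ
  rw [Vθ_eq_of_eomθ hsin eomθ, hVφ]
  simp only [Pi.mul_apply]
  field_simp
  linear_combination (sin (θ t) * θ' t * φ' t) * sin_sq_add_cos_sq (φ t)

end Trajectory

theorem sphere_noether_bI2_cI3_general
    (b c : ℝ)
    (V : ℝ × ℝ → ℝ)
    (F : ℝ → ℝ) (hF : Differentiable ℝ F)
    (hform : ∀ p : ℝ × ℝ, V p = F (b * sin p.1 * sin p.2 + c * cos p.2))
    (t₀ t₁ : ℝ) (φ θ φ' θ' φ'' θ'' : ℝ → ℝ)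
    (hφ : ∀ t ∈ Set.Ioo t₀ t₁, HasDerivAt φ (φ' t) t)
    (hφ' : ∀ t ∈ Set.Ioo t₀ t₁, HasDerivAt φ' (φ'' t) t)
    (hθ : ∀ t ∈ Set.Ioo t₀ t₁, HasDerivAt θ (θ' t) t)
    (hθ' : ∀ t ∈ Set.Ioo t₀ t₁, HasDerivAt θ' (θ'' t) t)
    (hsin : ∀ t ∈ Set.Ioo t₀ t₁, sin (φ t) ≠ 0)
    (eomφ : ∀ t ∈ Set.Ioo t₀ t₁,
      φ'' t - sin (φ t) * cos (φ t) * (θ' t) ^ 2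
        + fderiv ℝ V (θ t, φ t) (0, 1) = 0)
    (eomθ : ∀ t ∈ Set.Ioo t₀ t₁,
      θ'' t + 2 * (cos (φ t) / sin (φ t)) * θ' t * φ' t
        + (1 / sin (φ t) ^ 2) * fderiv ℝ V (θ t, φ t) (1, 0) = 0) :
    ∀ s ∈ Set.Ioo t₀ t₁, ∀ t ∈ Set.Ioo t₀ t₁,
      b * (φ' s * cos (θ s) - θ' s * sin (θ s) * sin (φ s) * cos (φ s))
          + c * (θ' s * sin (φ s) ^ 2) =
      b * (φ' t * cos (θ t) - θ' t * sin (θ t) * sin (φ t) * cos (φ t))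
          + c * (θ' t * sin (φ t) ^ 2) := by
  have hderiv : ∀ t ∈ Set.Ioo t₀ t₁, HasDerivAt (fun t =>
      b * (φ' t * cos (θ t) - θ' t * sin (θ t) * sin (φ t) * cos (φ t))
        + c * (θ' t * sin (φ t) ^ 2)) 0 t := by
    intro t ht
    have hI₂ := hasDerivAt_secondIntegral (hφ t ht) (hφ' t ht) (hθ t ht) (hθ' t ht) (hsin t ht)
      (eomφ t ht) (eomθ t ht)
    have hI₃ := hasDerivAt_thirdIntegral (hφ t ht) (hθ' t ht) (hsin t ht) (eomθ t ht)
    refine ((hI₂.const_mul b).add (hI₃.const_mul c)).congr_deriv ?_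
    linear_combination -axial_potential_rotation_invariant hF hform (p := (θ t, φ t)) (hsin t ht)
  intro s hs t ht
  exact isOpen_Ioo.is_const_of_deriv_eq_zero isPreconnected_Ioo
    (fun x hx => (hderiv x hx).differentiableAt.differentiableWithinAt)
    (fun x hx => (hderiv x hx).deriv) hs ht

/-- motion on the 2-sphere with potential of the form
`V(θ, φ) = F(b·sin θ·sin φ + c·cos φ)`. Along any solution on an interval where
`sin φ ≠ 0`, the combination `b·I² + c·I³` of the Noether integrals
`I² = φ̇·cos θ − θ̇·sin θ·sin φ·cos φ` and `I³ = θ̇·sin²φ` is constant. -/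
theorem sphere_noether_bI2_cI3
    (b c : ℝ)
    (V : ℝ × ℝ → ℝ) (hV : Differentiable ℝ V)
    (F : ℝ → ℝ) (hF : Differentiable ℝ F)
    (hform : ∀ p : ℝ × ℝ, V p = F (b * sin p.1 * sin p.2 + c * cos p.2))
    (t₀ t₁ : ℝ) (φ θ φ' θ' φ'' θ'' : ℝ → ℝ)
    (hφ : ∀ t ∈ Set.Ioo t₀ t₁, HasDerivAt φ (φ' t) t)
    (hφ' : ∀ t ∈ Set.Ioo t₀ t₁, HasDerivAt φ' (φ'' t) t)
    (hθ : ∀ t ∈ Set.Ioo t₀ t₁, HasDerivAt θ (θ' t) t)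
    (hθ' : ∀ t ∈ Set.Ioo t₀ t₁, HasDerivAt θ' (θ'' t) t)
    (hsin : ∀ t ∈ Set.Ioo t₀ t₁, sin (φ t) ≠ 0)
    (eomφ : ∀ t ∈ Set.Ioo t₀ t₁,
      φ'' t - sin (φ t) * cos (φ t) * (θ' t) ^ 2
        + fderiv ℝ V (θ t, φ t) (0, 1) = 0)
    (eomθ : ∀ t ∈ Set.Ioo t₀ t₁,
      θ'' t + 2 * (cos (φ t) / sin (φ t)) * θ' t * φ' t
        + (1 / sin (φ t) ^ 2) * fderiv ℝ V (θ t, φ t) (1, 0) = 0) :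
    ∀ s ∈ Set.Ioo t₀ t₁, ∀ t ∈ Set.Ioo t₀ t₁,
      b * (φ' s * cos (θ s) - θ' s * sin (θ s) * sin (φ s) * cos (φ s))
          + c * (θ' s * sin (φ s) ^ 2) =
      b * (φ' t * cos (θ t) - θ' t * sin (θ t) * sin (φ t) * cos (φ t))
          + c * (θ' t * sin (φ t) ^ 2) :=
  sphere_noether_bI2_cI3_general b c V F hF hform t₀ t₁ φ θ φ' θ' φ'' θ'' hφ hφ' hθ hθ' hsin eomφ
    eomθ
end

section
/- Let a, b, c ∈ ℝ and suppose the potential of motion on the 2-sphere has the form V(θ, φ) = F((a·cos θ − b·sin θ)·sin φ − c·cos φ) for some differentiable function F : ℝ → ℝ. Then along any solution (φ(t), θ(t)) of the equations of motion on an interval where sin φ(t) ≠ 0, the quantity a·I¹(t) + b·I²(t) + c·I³(t) is constant, where I¹ = φ̇ sin θ + θ̇ cos θ sin φ cos φ, I² = φ̇ cos θ − θ̇ sin θ sin φ cos φ and I³ = θ̇ sin²φ. (This is the last row of Table 7, the general linear combination a I_{CK¹} + b I_{CK²} + c I_{CK³}.) -/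
/-!
In the coordinates `x = (sin φ cos θ, sin φ sin θ, cos φ)` of the unit sphere the argument of `F`
is the linear function `⟨(a, -b, -c), x⟩`, so the potential is invariant under the rotations about
the axis `(a, -b, -c)`. The combination `a I¹ + b I² + c I³` is the Noether integral of the Killing
field generating these rotations: along any solution its derivative is `-dV(K)`, which vanishes.
-/

open Real Set

noncomputable section

def noetherCombination (a b c φ θ φ' θ' : ℝ) : ℝ :=
  a * (φ' * sin θ + θ' * cos θ * sin φ * cos φ)
    + b * (φ' * cos θ - θ' * sin θ * sin φ * cos φ) + c * (θ' * sin φ ^ 2)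

/-- The Killing field of `a I¹ + b I² + c I³`; points of the sphere are `p = (θ, φ)`. -/
def killingField (a b c : ℝ) (p : ℝ × ℝ) : ℝ × ℝ :=
  ((a * cos p.1 - b * sin p.1) * cos p.2 / sin p.2 + c, a * sin p.1 + b * cos p.1)

def axialHeight (a b c : ℝ) (p : ℝ × ℝ) : ℝ :=
  (a * cos p.1 - b * sin p.1) * sin p.2 - c * cos p.2

end

theorem ContinuousLinearMap.apply_prod_eq {L : ℝ × ℝ →L[ℝ] ℝ} (u w : ℝ) :
    L (u, w) = u * L (1, 0) + w * L (0, 1) := by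
  have : ((u, w) : ℝ × ℝ) = u • (1, 0) + w • (0, 1) := by ext <;> simp
  rw [this, map_add, map_smul, map_smul, smul_eq_mul, smul_eq_mul]

theorem fderiv_prod_apply_of_hasDerivAt {f : ℝ × ℝ → ℝ} {x y fx fy : ℝ}
    (hf : DifferentiableAt ℝ f (x, y)) (hx : HasDerivAt (fun s => f (s, y)) fx x)
    (hy : HasDerivAt (fun s => f (x, s)) fy y) (u w : ℝ) :
    fderiv ℝ f (x, y) (u, w) = u * fx + w * fy := by
  have hx' : fderiv ℝ f (x, y) (1, 0) = fx :=
    (hf.hasFDerivAt.comp_hasDerivAt x ((hasDerivAt_id x).prodMk (hasDerivAt_const x y))).unique hx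
  have hy' : fderiv ℝ f (x, y) (0, 1) = fy :=
    (hf.hasFDerivAt.comp_hasDerivAt y ((hasDerivAt_const y x).prodMk (hasDerivAt_id y))).unique hy
  rw [ContinuousLinearMap.apply_prod_eq, hx', hy']

theorem fderiv_comp_axialHeight_killingField (a b c : ℝ) {F : ℝ → ℝ} (hF : Differentiable ℝ F)
    {x y : ℝ} (hy : sin y ≠ 0) :
    fderiv ℝ (fun q => F (axialHeight a b c q)) (x, y) (killingField a b c (x, y)) = 0 := by
  have hfst : HasDerivAt (fun s => axialHeight a b c (s, y))
      ((-(a * sin x) - b * cos x) * sin y) x := by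
    have := ((((hasDerivAt_cos x).const_mul a).sub ((hasDerivAt_sin x).const_mul b)).mul_const
      (sin y)).sub_const (c * cos y)
    exact this.congr_deriv (by ring)
  have hsnd : HasDerivAt (fun s => axialHeight a b c (x, s))
      ((a * cos x - b * sin x) * cos y + c * sin y) y := by
    have := ((hasDerivAt_sin y).const_mul (a * cos x - b * sin x)).sub
      ((hasDerivAt_cos y).const_mul c)
    exact this.congr_deriv (by ring)
  have hdiff : Differentiable ℝ (fun q => F (axialHeight a b c q)) := by
    unfold axialHeight; fun_prop
  rw [killingField, fderiv_prod_apply_of_hasDerivAt (hdiff _)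
    ((hF _).hasDerivAt.comp x hfst) ((hF _).hasDerivAt.comp y hsnd)]
  field_simp
  ring

theorem hasDerivAt_noetherCombination (a b c : ℝ) {φ θ φ' θ' : ℝ → ℝ} {t φ'' θ'' : ℝ}
    {L : ℝ × ℝ →L[ℝ] ℝ} (hφ : HasDerivAt φ (φ' t) t) (hφ' : HasDerivAt φ' φ'' t)
    (hθ : HasDerivAt θ (θ' t) t) (hθ' : HasDerivAt θ' θ'' t) (hsin : sin (φ t) ≠ 0)
    (eomφ : φ'' - sin (φ t) * cos (φ t) * θ' t ^ 2 + L (0, 1) = 0)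
    (eomθ : θ'' + 2 * (cos (φ t) / sin (φ t)) * θ' t * φ' t
      + 1 / sin (φ t) ^ 2 * L (1, 0) = 0) :
    HasDerivAt (fun t => noetherCombination a b c (φ t) (θ t) (φ' t) (θ' t))
      (-L (killingField a b c (θ t, φ t))) t := by
  have hsθ := (hasDerivAt_sin (θ t)).comp t hθ
  have hcθ := (hasDerivAt_cos (θ t)).comp t hθ
  have hsφ := (hasDerivAt_sin (φ t)).comp t hφ
  have hcφ := (hasDerivAt_cos (φ t)).comp t hφ
  have hD := ((((hφ'.mul hsθ).add (((hθ'.mul hcθ).mul hsφ).mul hcφ)).const_mul a).add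
    (((hφ'.mul hcθ).sub (((hθ'.mul hsθ).mul hsφ).mul hcφ)).const_mul b)).add
    ((hθ'.mul (hsφ.pow 2)).const_mul c)
  refine hD.congr_deriv ?_
  simp only [Function.comp_apply, Pi.mul_apply, Pi.pow_apply]
  rw [killingField, ContinuousLinearMap.apply_prod_eq]
  have hpyth := sin_sq_add_cos_sq (φ t)
  -- The equations of motion enter with the weights `K^φ` and `sin² φ · K^θ`; the remaining
  -- velocity terms cancel because `K` is a Killing field.
  linear_combination (norm := skip) (a * sin (θ t) + b * cos (θ t)) * eomφ
    + (a * cos (θ t) * sin (φ t) * cos (φ t) - b * sin (θ t) * sin (φ t) * cos (φ t)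
      + c * sin (φ t) ^ 2) * eomθ
  field_simp
  linear_combination -sin (φ t) * φ' t * θ' t * (a * cos (θ t) - b * sin (θ t)) * hpyth

theorem sphere_noether_aI1_bI2_cI3_general
    (a b c : ℝ)
    (V : ℝ × ℝ → ℝ)
    (F : ℝ → ℝ) (hF : Differentiable ℝ F)
    (hform : ∀ p : ℝ × ℝ,
      V p = F ((a * cos p.1 - b * sin p.1) * sin p.2 - c * cos p.2))
    (t₀ t₁ : ℝ) (φ θ φ' θ' φ'' θ'' : ℝ → ℝ)
    (hφ : ∀ t ∈ Set.Ioo t₀ t₁, HasDerivAt φ (φ' t) t)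
    (hφ' : ∀ t ∈ Set.Ioo t₀ t₁, HasDerivAt φ' (φ'' t) t)
    (hθ : ∀ t ∈ Set.Ioo t₀ t₁, HasDerivAt θ (θ' t) t)
    (hθ' : ∀ t ∈ Set.Ioo t₀ t₁, HasDerivAt θ' (θ'' t) t)
    (hsin : ∀ t ∈ Set.Ioo t₀ t₁, sin (φ t) ≠ 0)
    (eomφ : ∀ t ∈ Set.Ioo t₀ t₁,
      φ'' t - sin (φ t) * cos (φ t) * (θ' t) ^ 2
        + fderiv ℝ V (θ t, φ t) (0, 1) = 0)
    (eomθ : ∀ t ∈ Set.Ioo t₀ t₁,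
      θ'' t + 2 * (cos (φ t) / sin (φ t)) * θ' t * φ' t
        + (1 / sin (φ t) ^ 2) * fderiv ℝ V (θ t, φ t) (1, 0) = 0) :
    ∀ s ∈ Set.Ioo t₀ t₁, ∀ t ∈ Set.Ioo t₀ t₁,
      a * (φ' s * sin (θ s) + θ' s * cos (θ s) * sin (φ s) * cos (φ s))
          + b * (φ' s * cos (θ s) - θ' s * sin (θ s) * sin (φ s) * cos (φ s))
          + c * (θ' s * sin (φ s) ^ 2) =
      a * (φ' t * sin (θ t) + θ' t * cos (θ t) * sin (φ t) * cos (φ t))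
          + b * (φ' t * cos (θ t) - θ' t * sin (θ t) * sin (φ t) * cos (φ t))
          + c * (θ' t * sin (φ t) ^ 2) := by
  obtain rfl : V = fun p => F (axialHeight a b c p) := funext hform
  have hconst : ∀ t ∈ Ioo t₀ t₁,
      HasDerivAt (fun t => noetherCombination a b c (φ t) (θ t) (φ' t) (θ' t)) 0 t := by
    intro t ht
    have h := hasDerivAt_noetherCombination a b c (hφ t ht) (hφ' t ht) (hθ t ht) (hθ' t ht)
      (hsin t ht) (eomφ t ht) (eomθ t ht)
    rwa [fderiv_comp_axialHeight_killingField a b c hF (hsin t ht), neg_zero] at h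
  intro s hs t ht
  change noetherCombination a b c (φ s) (θ s) (φ' s) (θ' s)
    = noetherCombination a b c (φ t) (θ t) (φ' t) (θ' t)
  exact isOpen_Ioo.is_const_of_deriv_eq_zero isPreconnected_Ioo
    (fun t ht => (hconst t ht).differentiableAt.differentiableWithinAt)
    (fun t ht => (hconst t ht).deriv) hs ht

/-- motion on the 2-sphere with potential of the form
`V(θ, φ) = F((a·cos θ − b·sin θ)·sin φ − c·cos φ)`. Along any solution on an interval
where `sin φ ≠ 0`, the general linear combination `a·I¹ + b·I² + c·I³` of the Noether
integrals `I¹ = φ̇·sin θ + θ̇·cos θ·sin φ·cos φ`, `I² = φ̇·cos θ − θ̇·sin θ·sin φ·cos φ`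
and `I³ = θ̇·sin²φ` is constant. -/
theorem sphere_noether_aI1_bI2_cI3
    (a b c : ℝ)
    (V : ℝ × ℝ → ℝ) (hV : Differentiable ℝ V)
    (F : ℝ → ℝ) (hF : Differentiable ℝ F)
    (hform : ∀ p : ℝ × ℝ,
      V p = F ((a * cos p.1 - b * sin p.1) * sin p.2 - c * cos p.2))
    (t₀ t₁ : ℝ) (φ θ φ' θ' φ'' θ'' : ℝ → ℝ)
    (hφ : ∀ t ∈ Set.Ioo t₀ t₁, HasDerivAt φ (φ' t) t)
    (hφ' : ∀ t ∈ Set.Ioo t₀ t₁, HasDerivAt φ' (φ'' t) t)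
    (hθ : ∀ t ∈ Set.Ioo t₀ t₁, HasDerivAt θ (θ' t) t)
    (hθ' : ∀ t ∈ Set.Ioo t₀ t₁, HasDerivAt θ' (θ'' t) t)
    (hsin : ∀ t ∈ Set.Ioo t₀ t₁, sin (φ t) ≠ 0)
    (eomφ : ∀ t ∈ Set.Ioo t₀ t₁,
      φ'' t - sin (φ t) * cos (φ t) * (θ' t) ^ 2
        + fderiv ℝ V (θ t, φ t) (0, 1) = 0)
    (eomθ : ∀ t ∈ Set.Ioo t₀ t₁,
      θ'' t + 2 * (cos (φ t) / sin (φ t)) * θ' t * φ' t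
        + (1 / sin (φ t) ^ 2) * fderiv ℝ V (θ t, φ t) (1, 0) = 0) :
    ∀ s ∈ Set.Ioo t₀ t₁, ∀ t ∈ Set.Ioo t₀ t₁,
      a * (φ' s * sin (θ s) + θ' s * cos (θ s) * sin (φ s) * cos (φ s))
          + b * (φ' s * cos (θ s) - θ' s * sin (θ s) * sin (φ s) * cos (φ s))
          + c * (θ' s * sin (φ s) ^ 2) =
      a * (φ' t * sin (θ t) + θ' t * cos (θ t) * sin (φ t) * cos (φ t))
          + b * (φ' t * cos (θ t) - θ' t * sin (θ t) * sin (φ t) * cos (φ t))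
          + c * (θ' t * sin (φ t) ^ 2) :=
  sphere_noether_aI1_bI2_cI3_general a b c V F hF hform t₀ t₁ φ θ φ' θ' φ'' θ'' hφ hφ' hθ hθ' hsin
    eomφ eomθ
end

section
/- Suppose the potential of motion on the hyperbolic plane (the case K = −1) has the form V(θ, φ) = F(cos θ · sinh φ) for some differentiable function F : ℝ → ℝ. Then along any solution (φ(t), θ(t)) of the hyperbolic equations of motion on an interval where sinh φ(t) ≠ 0, the quantity I¹_h(t) = φ̇(t)·sin θ(t) + θ̇(t)·cos θ(t)·sinh φ(t)·cosh φ(t) is constant. -/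
/-!
I¹_h is the Noether integral of the Killing field `X = sin θ ∂_φ + cos θ coth φ ∂_θ` of the
hyperbolic plane. Along any solution of the equations of motion its time derivative is `-X V`,
and for `V = F (cos θ sinh φ)` the chain rule gives `X V = F' · (sin θ cos θ cosh φ - cos θ
coth φ sin θ sinh φ) = 0`: the function `cos θ sinh φ` is invariant under the flow of `X`.
-/

open Real

noncomputable section

def hyperbolicNoetherI1 (φ θ φ' θ' : ℝ → ℝ) (t : ℝ) : ℝ :=
  φ' t * sin (θ t) + θ' t * cos (θ t) * sinh (φ t) * cosh (φ t)

/-- The derivative of `V` along the Killing field `sin θ ∂_φ + cos θ coth φ ∂_θ`, at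
`p = (θ, φ)`. -/
def killingDerivI1 (V : ℝ × ℝ → ℝ) (p : ℝ × ℝ) : ℝ :=
  sin p.1 * fderiv ℝ V p (0, 1) + cos p.1 * (cosh p.2 / sinh p.2) * fderiv ℝ V p (1, 0)

end

theorem hasDerivAt_hyperbolicNoetherI1 {φ θ φ' θ' : ℝ → ℝ} {φ'' θ'' t : ℝ}
    (hφ : HasDerivAt φ (φ' t) t) (hφ' : HasDerivAt φ' φ'' t)
    (hθ : HasDerivAt θ (θ' t) t) (hθ' : HasDerivAt θ' θ'' t) :
    HasDerivAt (hyperbolicNoetherI1 φ θ φ' θ')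
      (φ'' * sin (θ t) + φ' t * (cos (θ t) * θ' t)
        + (θ'' * cos (θ t) - θ' t * (sin (θ t) * θ' t)) * sinh (φ t) * cosh (φ t)
        + θ' t * cos (θ t) * (cosh (φ t) ^ 2 + sinh (φ t) ^ 2) * φ' t) t := by
  refine ((hφ'.mul hθ.sin).add (((hθ'.mul hθ.cos).mul hφ.sinh).mul hφ.cosh)).congr_deriv ?_
  simp only [Pi.mul_apply]
  ring

theorem hasDerivAt_hyperbolicNoetherI1_of_eom {V : ℝ × ℝ → ℝ} {φ θ φ' θ' : ℝ → ℝ}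
    {φ'' θ'' t : ℝ}
    (hφ : HasDerivAt φ (φ' t) t) (hφ' : HasDerivAt φ' φ'' t)
    (hθ : HasDerivAt θ (θ' t) t) (hθ' : HasDerivAt θ' θ'' t)
    (hsinh : sinh (φ t) ≠ 0)
    (eomφ : φ'' - sinh (φ t) * cosh (φ t) * θ' t ^ 2 + fderiv ℝ V (θ t, φ t) (0, 1) = 0)
    (eomθ : θ'' + 2 * (cosh (φ t) / sinh (φ t)) * θ' t * φ' t
      + (1 / sinh (φ t) ^ 2) * fderiv ℝ V (θ t, φ t) (1, 0) = 0) :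
    HasDerivAt (hyperbolicNoetherI1 φ θ φ' θ') (-killingDerivI1 V (θ t, φ t)) t := by
  refine (hasDerivAt_hyperbolicNoetherI1 hφ hφ' hθ hθ').congr_deriv ?_
  have hcosh := cosh_sq (φ t)
  rw [killingDerivI1]
  field_simp at eomθ ⊢
  linear_combination sin (θ t) * sinh (φ t) * eomφ + cos (θ t) * cosh (φ t) * eomθ
    - θ' t * φ' t * cos (θ t) * sinh (φ t) * hcosh

theorem fderiv_comp_cos_mul_sinh_apply {F : ℝ → ℝ} {a b : ℝ}
    (hF : DifferentiableAt ℝ F (cos a * sinh b)) (x y : ℝ) :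
    fderiv ℝ (fun p : ℝ × ℝ => F (cos p.1 * sinh p.2)) (a, b) (x, y) =
      deriv F (cos a * sinh b) * (cos a * cosh b * y - sin a * sinh b * x) := by
  have h : HasFDerivAt (fun p : ℝ × ℝ => F (cos p.1 * sinh p.2)) _ (a, b) :=
    hF.hasDerivAt.comp_hasFDerivAt (a, b)
      ((hasFDerivAt_fst (p := (a, b))).cos.mul (hasFDerivAt_snd (p := (a, b))).sinh)
  rw [h.fderiv]
  simp only [smul_apply, add_apply,
    ContinuousLinearMap.coe_snd', ContinuousLinearMap.coe_fst', smul_eq_mul]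
  ring

theorem killingDerivI1_comp_cos_mul_sinh {F : ℝ → ℝ} {a b : ℝ}
    (hF : DifferentiableAt ℝ F (cos a * sinh b)) (hb : sinh b ≠ 0) :
    killingDerivI1 (fun p => F (cos p.1 * sinh p.2)) (a, b) = 0 := by
  rw [killingDerivI1, fderiv_comp_cos_mul_sinh_apply hF, fderiv_comp_cos_mul_sinh_apply hF]
  field_simp
  ring

theorem hyperbolic_noether_I1_general
    (V : ℝ × ℝ → ℝ)
    (F : ℝ → ℝ) (hF : Differentiable ℝ F)
    (hform : ∀ p : ℝ × ℝ, V p = F (cos p.1 * sinh p.2))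
    (t₀ t₁ : ℝ) (φ θ φ' θ' φ'' θ'' : ℝ → ℝ)
    (hφ : ∀ t ∈ Set.Ioo t₀ t₁, HasDerivAt φ (φ' t) t)
    (hφ' : ∀ t ∈ Set.Ioo t₀ t₁, HasDerivAt φ' (φ'' t) t)
    (hθ : ∀ t ∈ Set.Ioo t₀ t₁, HasDerivAt θ (θ' t) t)
    (hθ' : ∀ t ∈ Set.Ioo t₀ t₁, HasDerivAt θ' (θ'' t) t)
    (hsinh : ∀ t ∈ Set.Ioo t₀ t₁, sinh (φ t) ≠ 0)
    (eomφ : ∀ t ∈ Set.Ioo t₀ t₁,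
      φ'' t - sinh (φ t) * cosh (φ t) * (θ' t) ^ 2
        + fderiv ℝ V (θ t, φ t) (0, 1) = 0)
    (eomθ : ∀ t ∈ Set.Ioo t₀ t₁,
      θ'' t + 2 * (cosh (φ t) / sinh (φ t)) * θ' t * φ' t
        + (1 / sinh (φ t) ^ 2) * fderiv ℝ V (θ t, φ t) (1, 0) = 0) :
    ∀ s ∈ Set.Ioo t₀ t₁, ∀ t ∈ Set.Ioo t₀ t₁,
      φ' s * sin (θ s) + θ' s * cos (θ s) * sinh (φ s) * cosh (φ s) =
      φ' t * sin (θ t) + θ' t * cos (θ t) * sinh (φ t) * cosh (φ t) := by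
  obtain rfl : V = fun p => F (cos p.1 * sinh p.2) := funext hform
  have hI : ∀ t ∈ Set.Ioo t₀ t₁, HasDerivAt (hyperbolicNoetherI1 φ θ φ' θ') 0 t := by
    intro t ht
    simpa only [killingDerivI1_comp_cos_mul_sinh (hF _) (hsinh t ht), neg_zero] using
      hasDerivAt_hyperbolicNoetherI1_of_eom (hφ t ht) (hφ' t ht) (hθ t ht) (hθ' t ht)
        (hsinh t ht) (eomφ t ht) (eomθ t ht)
  intro s hs t ht
  exact isOpen_Ioo.is_const_of_deriv_eq_zero isPreconnected_Ioo
    (fun x hx => (hI x hx).differentiableAt.differentiableWithinAt) (fun x hx => (hI x hx).deriv)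
    hs ht

/-- motion on the hyperbolic plane (`K = −1`) with potential of the form
`V(θ, φ) = F(cos θ · sinh φ)`. Along any solution of the hyperbolic equations of motion
on an interval where `sinh φ ≠ 0`, the Noether integral
`I¹_h = φ̇·sin θ + θ̇·cos θ·sinh φ·cosh φ` is constant. -/
theorem hyperbolic_noether_I1
    (V : ℝ × ℝ → ℝ) (hV : Differentiable ℝ V)
    (F : ℝ → ℝ) (hF : Differentiable ℝ F)
    (hform : ∀ p : ℝ × ℝ, V p = F (cos p.1 * sinh p.2))
    (t₀ t₁ : ℝ) (φ θ φ' θ' φ'' θ'' : ℝ → ℝ)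
    (hφ : ∀ t ∈ Set.Ioo t₀ t₁, HasDerivAt φ (φ' t) t)
    (hφ' : ∀ t ∈ Set.Ioo t₀ t₁, HasDerivAt φ' (φ'' t) t)
    (hθ : ∀ t ∈ Set.Ioo t₀ t₁, HasDerivAt θ (θ' t) t)
    (hθ' : ∀ t ∈ Set.Ioo t₀ t₁, HasDerivAt θ' (θ'' t) t)
    (hsinh : ∀ t ∈ Set.Ioo t₀ t₁, sinh (φ t) ≠ 0)
    (eomφ : ∀ t ∈ Set.Ioo t₀ t₁,
      φ'' t - sinh (φ t) * cosh (φ t) * (θ' t) ^ 2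
        + fderiv ℝ V (θ t, φ t) (0, 1) = 0)
    (eomθ : ∀ t ∈ Set.Ioo t₀ t₁,
      θ'' t + 2 * (cosh (φ t) / sinh (φ t)) * θ' t * φ' t
        + (1 / sinh (φ t) ^ 2) * fderiv ℝ V (θ t, φ t) (1, 0) = 0) :
    ∀ s ∈ Set.Ioo t₀ t₁, ∀ t ∈ Set.Ioo t₀ t₁,
      φ' s * sin (θ s) + θ' s * cos (θ s) * sinh (φ s) * cosh (φ s) =
      φ' t * sin (θ t) + θ' t * cos (θ t) * sinh (φ t) * cosh (φ t) :=
  hyperbolic_noether_I1_general V F hF hform t₀ t₁ φ θ φ' θ' φ'' θ'' hφ hφ' hθ hθ' hsinh eomφ eomθ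
end

section
/- Let a, b, c ∈ ℝ and suppose the potential of motion on the hyperbolic plane has the form V(θ, φ) = F((a·cos θ − b·sin θ)·sinh φ + c·cosh φ) for some differentiable function F : ℝ → ℝ. Then along any solution (φ(t), θ(t)) of the hyperbolic equations of motion on an interval where sinh φ(t) ≠ 0, the quantity a·I¹_h(t) + b·I²_h(t) + c·I³_h(t) is constant, where I¹_h = φ̇ sin θ + θ̇ cos θ sinh φ cosh φ, I²_h = φ̇ cos θ − θ̇ sin θ sinh φ cosh φ, and I³_h = θ̇ sinh²φ. (This is the last row of Table 7 in the case K = −1.) -/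
open Real

/-!
`a I¹_h + b I²_h + c I³_h` is the momentum `g(ξ, γ̇)` of the Killing field
`ξ = (a sin θ + b cos θ) ∂_φ + ((a cos θ - b sin θ) coth φ + c) ∂_θ` of the metric
`dφ² + sinh² φ dθ²`. Along any curve its derivative is the `ξ`-component of the geodesic
acceleration, so along a solution it equals `-dV(ξ)`. The potential is `F ∘ u` with
`u = (a cos θ - b sin θ) sinh φ + c cosh φ`, and `sinh φ · ξ = (∂_φ u) ∂_θ - (∂_θ u) ∂_φ` is the
skew gradient of `u`, which annihilates every function of `u`; hence `dV(ξ) = 0`.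
-/

/-- The linear form `(X, Y, Z) ↦ a X - b Y + c Z` on the hyperboloid model
`(sinh φ cos θ, sinh φ sin θ, cosh φ)`, in the coordinates `p = (θ, φ)`. -/
noncomputable def hyperboloidLinear (a b c : ℝ) (p : ℝ × ℝ) : ℝ :=
  (a * cos p.1 - b * sin p.1) * sinh p.2 + c * cosh p.2

noncomputable def hyperbolicNoetherCharge (a b c θ φ θ' φ' : ℝ) : ℝ :=
  a * (φ' * sin θ + θ' * cos θ * sinh φ * cosh φ)
    + b * (φ' * cos θ - θ' * sin θ * sinh φ * cosh φ)
    + c * (θ' * sinh φ ^ 2)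

theorem fderiv_comp_apply_mul_comm {𝕜 E : Type*} [NontriviallyNormedField 𝕜]
    [NormedAddCommGroup E] [NormedSpace 𝕜 E] {u : E → 𝕜} {F : 𝕜 → 𝕜} {p : E}
    (hu : DifferentiableAt 𝕜 u p) (hF : DifferentiableAt 𝕜 F (u p)) (v w : E) :
    fderiv 𝕜 u p v * fderiv 𝕜 (F ∘ u) p w = fderiv 𝕜 u p w * fderiv 𝕜 (F ∘ u) p v := by
  simp only [fderiv_comp p hF hu, ContinuousLinearMap.comp_apply, ← toSpanSingleton_deriv,
    ContinuousLinearMap.toSpanSingleton_apply, smul_eq_mul]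
  ring

theorem hasFDerivAt_hyperboloidLinear (a b c : ℝ) (p : ℝ × ℝ) :
    HasFDerivAt (hyperboloidLinear a b c)
      ((-(a * sin p.1 + b * cos p.1) * sinh p.2) • ContinuousLinearMap.fst ℝ ℝ ℝ
        + ((a * cos p.1 - b * sin p.1) * cosh p.2 + c * sinh p.2) •
          ContinuousLinearMap.snd ℝ ℝ ℝ) p := by
  have hcos := (hasDerivAt_cos p.1).comp_hasFDerivAt p (hasFDerivAt_fst (𝕜 := ℝ) (p := p))
  have hsin := (hasDerivAt_sin p.1).comp_hasFDerivAt p (hasFDerivAt_fst (𝕜 := ℝ) (p := p))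
  have hsinh := (hasDerivAt_sinh p.2).comp_hasFDerivAt p (hasFDerivAt_snd (𝕜 := ℝ) (p := p))
  have hcosh := (hasDerivAt_cosh p.2).comp_hasFDerivAt p (hasFDerivAt_snd (𝕜 := ℝ) (p := p))
  exact ((((hcos.const_mul a).sub (hsin.const_mul b)).mul hsinh).add
    (hcosh.const_mul c)).congr_fderiv (by ext <;> simp; ring)

theorem fderiv_comp_hyperboloidLinear_killing (a b c : ℝ) {F : ℝ → ℝ} (p : ℝ × ℝ)
    (hF : DifferentiableAt ℝ F (hyperboloidLinear a b c p)) :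
    (a * sin p.1 + b * cos p.1) * sinh p.2 * fderiv ℝ (F ∘ hyperboloidLinear a b c) p (0, 1)
      + ((a * cos p.1 - b * sin p.1) * cosh p.2 + c * sinh p.2) *
        fderiv ℝ (F ∘ hyperboloidLinear a b c) p (1, 0) = 0 := by
  have hu := hasFDerivAt_hyperboloidLinear a b c p
  have h := fderiv_comp_apply_mul_comm hu.differentiableAt hF (1, 0) (0, 1)
  simp only [hu.fderiv, add_apply, smul_apply, ContinuousLinearMap.coe_fst',
    ContinuousLinearMap.coe_snd', smul_eq_mul, mul_one, mul_zero, add_zero, zero_add] at h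
  linear_combination -h

theorem hasDerivAt_hyperbolicNoetherCharge (a b c : ℝ) {θ φ θ' φ' : ℝ → ℝ} {θ'' φ'' t : ℝ}
    (hθ : HasDerivAt θ (θ' t) t) (hφ : HasDerivAt φ (φ' t) t)
    (hθ' : HasDerivAt θ' θ'' t) (hφ' : HasDerivAt φ' φ'' t) :
    HasDerivAt (fun t ↦ hyperbolicNoetherCharge a b c (θ t) (φ t) (θ' t) (φ' t))
      ((a * sin (θ t) + b * cos (θ t)) * (φ'' - sinh (φ t) * cosh (φ t) * θ' t ^ 2)
        + ((a * cos (θ t) - b * sin (θ t)) * cosh (φ t) + c * sinh (φ t)) *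
          (sinh (φ t) * θ'' + 2 * cosh (φ t) * θ' t * φ' t)) t := by
  have hsin := (hasDerivAt_sin (θ t)).comp t hθ
  have hcos := (hasDerivAt_cos (θ t)).comp t hθ
  have hsinh := (hasDerivAt_sinh (φ t)).comp t hφ
  have hcosh := (hasDerivAt_cosh (φ t)).comp t hφ
  have H := (((((hφ'.mul hsin).add (((hθ'.mul hcos).mul hsinh).mul hcosh)).const_mul a).add
    (((hφ'.mul hcos).sub (((hθ'.mul hsin).mul hsinh).mul hcosh)).const_mul b)).add
      ((hθ'.mul (hsinh.pow 2)).const_mul c))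
  refine H.congr_deriv ?_
  simp only [Function.comp_apply, Pi.mul_apply, Pi.pow_apply]
  linear_combination (-(a * cos (θ t) - b * sin (θ t)) * θ' t * φ' t) * cosh_sq (φ t)

theorem hyperbolic_noether_aI1_bI2_cI3_general
    (a b c : ℝ)
    (V : ℝ × ℝ → ℝ)
    (F : ℝ → ℝ) (hF : Differentiable ℝ F)
    (hform : ∀ p : ℝ × ℝ,
      V p = F ((a * cos p.1 - b * sin p.1) * sinh p.2 + c * cosh p.2))
    (t₀ t₁ : ℝ) (φ θ φ' θ' φ'' θ'' : ℝ → ℝ)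
    (hφ : ∀ t ∈ Set.Ioo t₀ t₁, HasDerivAt φ (φ' t) t)
    (hφ' : ∀ t ∈ Set.Ioo t₀ t₁, HasDerivAt φ' (φ'' t) t)
    (hθ : ∀ t ∈ Set.Ioo t₀ t₁, HasDerivAt θ (θ' t) t)
    (hθ' : ∀ t ∈ Set.Ioo t₀ t₁, HasDerivAt θ' (θ'' t) t)
    (hsinh : ∀ t ∈ Set.Ioo t₀ t₁, sinh (φ t) ≠ 0)
    (eomφ : ∀ t ∈ Set.Ioo t₀ t₁,
      φ'' t - sinh (φ t) * cosh (φ t) * (θ' t) ^ 2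
        + fderiv ℝ V (θ t, φ t) (0, 1) = 0)
    (eomθ : ∀ t ∈ Set.Ioo t₀ t₁,
      θ'' t + 2 * (cosh (φ t) / sinh (φ t)) * θ' t * φ' t
        + (1 / sinh (φ t) ^ 2) * fderiv ℝ V (θ t, φ t) (1, 0) = 0) :
    ∀ s ∈ Set.Ioo t₀ t₁, ∀ t ∈ Set.Ioo t₀ t₁,
      a * (φ' s * sin (θ s) + θ' s * cos (θ s) * sinh (φ s) * cosh (φ s))
          + b * (φ' s * cos (θ s) - θ' s * sin (θ s) * sinh (φ s) * cosh (φ s))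
          + c * (θ' s * sinh (φ s) ^ 2) =
      a * (φ' t * sin (θ t) + θ' t * cos (θ t) * sinh (φ t) * cosh (φ t))
          + b * (φ' t * cos (θ t) - θ' t * sin (θ t) * sinh (φ t) * cosh (φ t))
          + c * (θ' t * sinh (φ t) ^ 2) := by
  have hVF : V = F ∘ hyperboloidLinear a b c := funext hform
  have hconserved : ∀ τ ∈ Set.Ioo t₀ t₁,
      HasDerivAt (fun t ↦ hyperbolicNoetherCharge a b c (θ t) (φ t) (θ' t) (φ' t)) 0 τ := by
    intro τ hτ
    refine (hasDerivAt_hyperbolicNoetherCharge a b c (hθ τ hτ) (hφ τ hτ) (hθ' τ hτ)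
      (hφ' τ hτ)).congr_deriv ?_
    have hkilling := fderiv_comp_hyperboloidLinear_killing a b c (θ τ, φ τ) (hF _)
    rw [← hVF] at hkilling
    have hs := hsinh τ hτ
    have eθ := eomθ τ hτ
    field_simp at eθ
    refine (mul_eq_zero.mp ?_).resolve_left hs
    linear_combination (a * sin (θ τ) + b * cos (θ τ)) * sinh (φ τ) * eomφ τ hτ
      + ((a * cos (θ τ) - b * sin (θ τ)) * cosh (φ τ) + c * sinh (φ τ)) * eθ - hkilling
  intro s hs t ht
  exact isOpen_Ioo.is_const_of_deriv_eq_zero isPreconnected_Ioo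
    (fun x hx ↦ (hconserved x hx).differentiableAt.differentiableWithinAt)
    (fun x hx ↦ (hconserved x hx).deriv) hs ht

/-- motion on the hyperbolic plane (`K = −1`) with potential of the form
`V(θ, φ) = F((a·cos θ − b·sin θ)·sinh φ + c·cosh φ)`. Along any solution of the
hyperbolic equations of motion on an interval where `sinh φ ≠ 0`, the combination
`a·I¹_h + b·I²_h + c·I³_h` of the Noether integrals
`I¹_h = φ̇·sin θ + θ̇·cos θ·sinh φ·cosh φ`, `I²_h = φ̇·cos θ − θ̇·sin θ·sinh φ·cosh φ`
and `I³_h = θ̇·sinh²φ` is constant. -/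
theorem hyperbolic_noether_aI1_bI2_cI3
    (a b c : ℝ)
    (V : ℝ × ℝ → ℝ) (hV : Differentiable ℝ V)
    (F : ℝ → ℝ) (hF : Differentiable ℝ F)
    (hform : ∀ p : ℝ × ℝ,
      V p = F ((a * cos p.1 - b * sin p.1) * sinh p.2 + c * cosh p.2))
    (t₀ t₁ : ℝ) (φ θ φ' θ' φ'' θ'' : ℝ → ℝ)
    (hφ : ∀ t ∈ Set.Ioo t₀ t₁, HasDerivAt φ (φ' t) t)
    (hφ' : ∀ t ∈ Set.Ioo t₀ t₁, HasDerivAt φ' (φ'' t) t)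
    (hθ : ∀ t ∈ Set.Ioo t₀ t₁, HasDerivAt θ (θ' t) t)
    (hθ' : ∀ t ∈ Set.Ioo t₀ t₁, HasDerivAt θ' (θ'' t) t)
    (hsinh : ∀ t ∈ Set.Ioo t₀ t₁, sinh (φ t) ≠ 0)
    (eomφ : ∀ t ∈ Set.Ioo t₀ t₁,
      φ'' t - sinh (φ t) * cosh (φ t) * (θ' t) ^ 2
        + fderiv ℝ V (θ t, φ t) (0, 1) = 0)
    (eomθ : ∀ t ∈ Set.Ioo t₀ t₁,
      θ'' t + 2 * (cosh (φ t) / sinh (φ t)) * θ' t * φ' t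
        + (1 / sinh (φ t) ^ 2) * fderiv ℝ V (θ t, φ t) (1, 0) = 0) :
    ∀ s ∈ Set.Ioo t₀ t₁, ∀ t ∈ Set.Ioo t₀ t₁,
      a * (φ' s * sin (θ s) + θ' s * cos (θ s) * sinh (φ s) * cosh (φ s))
          + b * (φ' s * cos (θ s) - θ' s * sin (θ s) * sinh (φ s) * cosh (φ s))
          + c * (θ' s * sinh (φ s) ^ 2) =
      a * (φ' t * sin (θ t) + θ' t * cos (θ t) * sinh (φ t) * cosh (φ t))
          + b * (φ' t * cos (θ t) - θ' t * sin (θ t) * sinh (φ t) * cosh (φ t))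
          + c * (θ' t * sinh (φ t) ^ 2) :=
  hyperbolic_noether_aI1_bI2_cI3_general a b c V F hF hform t₀ t₁ φ θ φ' θ' φ'' θ'' hφ hφ' hθ hθ'
    hsinh eomφ eomθ
end

section
/- For the Bianchi I model with massless scalar field (zero potential), the Noether integral of the boost-type Killing vector Y⁵ = φ∂_{β₁} − (3/2)β₁∂_φ is conserved: if λ, β₁, φ : ℝ → ℝ are twice differentiable and satisfy β̈₁ + 3λ̇β̇₁ = 0 and φ̈ + 3λ̇φ̇ = 0, then the function t ↦ e^{3λ(t)}·( φ(t)·β̇₁(t) − β₁(t)·φ̇(t) ) is constant on ℝ. -/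
open Real

/-!
By Abel's identity the Wronskian `φ β̇₁ − β₁ φ̇` of two solutions of `ÿ + 3λ̇ ẏ = 0`
satisfies `Ẇ = −3λ̇ W`, so `e^{3λ} W` has zero derivative.
-/

section Abel

variable {a b f f' f'' g g' g'' : ℝ → ℝ}

theorem hasDerivAt_wronskian
    (hf : ∀ t, HasDerivAt f (f' t) t) (hf' : ∀ t, HasDerivAt f' (f'' t) t)
    (hg : ∀ t, HasDerivAt g (g' t) t) (hg' : ∀ t, HasDerivAt g' (g'' t) t)
    (hf_eq : ∀ t, f'' t + a t * f' t + b t * f t = 0)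
    (hg_eq : ∀ t, g'' t + a t * g' t + b t * g t = 0) (x : ℝ) :
    HasDerivAt (fun t => f t * g' t - g t * f' t) (-a x * (f x * g' x - g x * f' x)) x := by
  refine (((hf x).mul (hg' x)).sub ((hg x).mul (hf' x))).congr_deriv ?_
  linear_combination f x * hg_eq x - g x * hf_eq x

theorem hasDerivAt_exp_mul_eq_zero {Λ u : ℝ → ℝ} (hΛ : ∀ t, HasDerivAt Λ (a t) t)
    (hu : ∀ t, HasDerivAt u (-a t * u t) t) (x : ℝ) :
    HasDerivAt (fun t => exp (Λ t) * u t) 0 x := by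
  refine ((hΛ x).exp.mul (hu x)).congr_deriv ?_
  ring

theorem exp_mul_wronskian_eq {Λ : ℝ → ℝ} (hΛ : ∀ t, HasDerivAt Λ (a t) t)
    (hf : ∀ t, HasDerivAt f (f' t) t) (hf' : ∀ t, HasDerivAt f' (f'' t) t)
    (hg : ∀ t, HasDerivAt g (g' t) t) (hg' : ∀ t, HasDerivAt g' (g'' t) t)
    (hf_eq : ∀ t, f'' t + a t * f' t + b t * f t = 0)
    (hg_eq : ∀ t, g'' t + a t * g' t + b t * g t = 0) (s t : ℝ) :
    exp (Λ s) * (f s * g' s - g s * f' s) = exp (Λ t) * (f t * g' t - g t * f' t) :=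
  have hW := hasDerivAt_exp_mul_eq_zero hΛ (hasDerivAt_wronskian hf hf' hg hg' hf_eq hg_eq)
  is_const_of_deriv_eq_zero (fun x => (hW x).differentiableAt) (fun x => (hW x).deriv) s t

end Abel

theorem bianchiI_noether_Y5_general
    (lam β₁ φ lam' β₁' φ' β₁'' φ'' : ℝ → ℝ)
    (hlam : ∀ t : ℝ, HasDerivAt lam (lam' t) t)
    (hβ₁ : ∀ t : ℝ, HasDerivAt β₁ (β₁' t) t)
    (hβ₁' : ∀ t : ℝ, HasDerivAt β₁' (β₁'' t) t)
    (hφ : ∀ t : ℝ, HasDerivAt φ (φ' t) t)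
    (hφ' : ∀ t : ℝ, HasDerivAt φ' (φ'' t) t)
    (eomβ₁ : ∀ t : ℝ, β₁'' t + 3 * lam' t * β₁' t = 0)
    (eomφ : ∀ t : ℝ, φ'' t + 3 * lam' t * φ' t = 0) :
    ∀ s t : ℝ,
      exp (3 * lam s) * (φ s * β₁' s - β₁ s * φ' s) =
      exp (3 * lam t) * (φ t * β₁' t - β₁ t * φ' t) :=
  exp_mul_wronskian_eq (a := fun t => 3 * lam' t) (b := 0) (fun t => (hlam t).const_mul 3)
    hφ hφ' hβ₁ hβ₁' (by simpa using eomφ) (by simpa using eomβ₁)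

/-- for the Bianchi I model with massless scalar field, the Noether
integral of the boost-type Killing vector `Y⁵ = φ∂_{β₁} − (3/2)β₁∂_φ` is conserved: if
`β̈₁ + 3λ̇β̇₁ = 0` and `φ̈ + 3λ̇φ̇ = 0` then `e^{3λ}·(φβ̇₁ − β₁φ̇)` is constant. -/
theorem bianchiI_noether_Y5
    (lam β₁ φ lam' β₁' φ' lam'' β₁'' φ'' : ℝ → ℝ)
    (hlam : ∀ t : ℝ, HasDerivAt lam (lam' t) t)
    (hlam' : ∀ t : ℝ, HasDerivAt lam' (lam'' t) t)
    (hβ₁ : ∀ t : ℝ, HasDerivAt β₁ (β₁' t) t)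
    (hβ₁' : ∀ t : ℝ, HasDerivAt β₁' (β₁'' t) t)
    (hφ : ∀ t : ℝ, HasDerivAt φ (φ' t) t)
    (hφ' : ∀ t : ℝ, HasDerivAt φ' (φ'' t) t)
    (eomβ₁ : ∀ t : ℝ, β₁'' t + 3 * lam' t * β₁' t = 0)
    (eomφ : ∀ t : ℝ, φ'' t + 3 * lam' t * φ' t = 0) :
    ∀ s t : ℝ,
      exp (3 * lam s) * (φ s * β₁' s - β₁ s * φ' s) =
      exp (3 * lam t) * (φ t * β₁' t - β₁ t * φ' t) :=
  bianchiI_noether_Y5_general lam β₁ φ lam' β₁' φ' β₁'' φ'' hlam hβ₁ hβ₁' hφ hφ' eomβ₁ eomφ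
end

section
/- For the Bianchi I model with massless scalar field (zero potential), the Noether integral of the point symmetry 2t∂_t + H^i (where H^i = (2/3)∂_λ is the gradient homothetic vector of the minisuperspace metric) is conserved: if λ, β₁, β₂, φ : ℝ → ℝ are twice differentiable and satisfy λ̈ + (3/2)λ̇² + (3/8)(β̇₁² + β̇₂²) + (1/4)φ̇² = 0, β̈₁ + 3λ̇β̇₁ = 0, β̈₂ + 3λ̇β̇₂ = 0 and φ̈ + 3λ̇φ̇ = 0, then the function t ↦ 2t·E(t) − 8e^{3λ(t)}·λ̇(t) is constant on ℝ, where E(t) = e^{3λ(t)}( 6λ̇(t)² − (3/2)(β̇₁(t)² + β̇₂(t)²) − φ̇(t)² ) is the Hamiltonian. -/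
open Real

/-!
Along solutions the Hamiltonian `E` is conserved, and the equation for `λ` gives
`d/dt (e^{3λ} λ̇) = e^{3λ} (λ̈ + 3 λ̇²) = E / 4`. Hence the derivative of
`2t·E − 8 e^{3λ} λ̇` is `2E − 8 · E/4 = 0`, and a function with vanishing derivative on `ℝ`
is constant.
-/

namespace BianchiI

noncomputable def hamiltonian (lam lam' β₁' β₂' φ' : ℝ → ℝ) (t : ℝ) : ℝ :=
  exp (3 * lam t) * (6 * lam' t ^ 2 - (3 / 2) * (β₁' t ^ 2 + β₂' t ^ 2) - φ' t ^ 2)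

noncomputable def noetherCharge (lam lam' β₁' β₂' φ' : ℝ → ℝ) (t : ℝ) : ℝ :=
  2 * t * hamiltonian lam lam' β₁' β₂' φ' t - 8 * exp (3 * lam t) * lam' t

variable {lam lam' β₁' β₂' φ' : ℝ → ℝ} {t : ℝ}

theorem hasDerivAt_exp_three_mul_mul {v : ℝ → ℝ} {l a : ℝ} (hlam : HasDerivAt lam l t)
    (hv : HasDerivAt v a t) :
    HasDerivAt (fun t => exp (3 * lam t) * v t) (exp (3 * lam t) * (3 * l * v t + a)) t := by
  refine (((hlam.const_mul 3).exp).fun_mul hv).congr_deriv ?_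
  ring

theorem hasDerivAt_hamiltonian {a b₁ b₂ f : ℝ}
    (hlam : HasDerivAt lam (lam' t) t) (hlam' : HasDerivAt lam' a t)
    (hβ₁' : HasDerivAt β₁' b₁ t) (hβ₂' : HasDerivAt β₂' b₂ t) (hφ' : HasDerivAt φ' f t)
    (eomlam : a + (3 / 2) * lam' t ^ 2 + (3 / 8) * (β₁' t ^ 2 + β₂' t ^ 2)
      + (1 / 4) * φ' t ^ 2 = 0)
    (eomβ₁ : b₁ + 3 * lam' t * β₁' t = 0) (eomβ₂ : b₂ + 3 * lam' t * β₂' t = 0)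
    (eomφ : f + 3 * lam' t * φ' t = 0) :
    HasDerivAt (hamiltonian lam lam' β₁' β₂' φ') 0 t := by
  have hkin : HasDerivAt (fun t => 6 * lam' t ^ 2 - (3 / 2) * (β₁' t ^ 2 + β₂' t ^ 2) - φ' t ^ 2)
      (12 * lam' t * a - 3 * (β₁' t * b₁ + β₂' t * b₂) - 2 * φ' t * f) t := by
    refine ((((hlam'.fun_pow 2).const_mul 6).fun_sub
      (((hβ₁'.fun_pow 2).fun_add (hβ₂'.fun_pow 2)).const_mul (3 / 2))).fun_sub
      (hφ'.fun_pow 2)).congr_deriv ?_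
    push_cast
    ring
  refine (hasDerivAt_exp_three_mul_mul hlam hkin).congr_deriv ?_
  linear_combination exp (3 * lam t) *
    (12 * lam' t * eomlam - 3 * β₁' t * eomβ₁ - 3 * β₂' t * eomβ₂ - 2 * φ' t * eomφ)

theorem hasDerivAt_exp_three_mul_mul_lam' {a : ℝ}
    (hlam : HasDerivAt lam (lam' t) t) (hlam' : HasDerivAt lam' a t)
    (eomlam : a + (3 / 2) * lam' t ^ 2 + (3 / 8) * (β₁' t ^ 2 + β₂' t ^ 2)
      + (1 / 4) * φ' t ^ 2 = 0) :
    HasDerivAt (fun t => exp (3 * lam t) * lam' t)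
      (hamiltonian lam lam' β₁' β₂' φ' t / 4) t := by
  refine (hasDerivAt_exp_three_mul_mul hlam hlam').congr_deriv ?_
  unfold hamiltonian
  linear_combination exp (3 * lam t) * eomlam

theorem hasDerivAt_noetherCharge {a b₁ b₂ f : ℝ}
    (hlam : HasDerivAt lam (lam' t) t) (hlam' : HasDerivAt lam' a t)
    (hβ₁' : HasDerivAt β₁' b₁ t) (hβ₂' : HasDerivAt β₂' b₂ t) (hφ' : HasDerivAt φ' f t)
    (eomlam : a + (3 / 2) * lam' t ^ 2 + (3 / 8) * (β₁' t ^ 2 + β₂' t ^ 2)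
      + (1 / 4) * φ' t ^ 2 = 0)
    (eomβ₁ : b₁ + 3 * lam' t * β₁' t = 0) (eomβ₂ : b₂ + 3 * lam' t * β₂' t = 0)
    (eomφ : f + 3 * lam' t * φ' t = 0) :
    HasDerivAt (noetherCharge lam lam' β₁' β₂' φ') 0 t := by
  have hE := hasDerivAt_hamiltonian hlam hlam' hβ₁' hβ₂' hφ' eomlam eomβ₁ eomβ₂ eomφ
  have hp := hasDerivAt_exp_three_mul_mul_lam' hlam hlam' eomlam
  have h8 : HasDerivAt (fun t => 8 * exp (3 * lam t) * lam' t)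
      (8 * (hamiltonian lam lam' β₁' β₂' φ' t / 4)) t := by
    simpa only [mul_assoc] using hp.const_mul 8
  refine ((((hasDerivAt_id' t).const_mul 2).fun_mul hE).fun_sub h8).congr_deriv ?_
  ring

end BianchiI

theorem bianchiI_noether_2tdt_H_general
    (lam lam' β₁' β₂' φ' lam'' β₁'' β₂'' φ'' : ℝ → ℝ)
    (hlam : ∀ t : ℝ, HasDerivAt lam (lam' t) t)
    (hlam' : ∀ t : ℝ, HasDerivAt lam' (lam'' t) t)
    (hβ₁' : ∀ t : ℝ, HasDerivAt β₁' (β₁'' t) t)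
    (hβ₂' : ∀ t : ℝ, HasDerivAt β₂' (β₂'' t) t)
    (hφ' : ∀ t : ℝ, HasDerivAt φ' (φ'' t) t)
    (eomlam : ∀ t : ℝ, lam'' t + (3 / 2) * lam' t ^ 2
      + (3 / 8) * (β₁' t ^ 2 + β₂' t ^ 2) + (1 / 4) * φ' t ^ 2 = 0)
    (eomβ₁ : ∀ t : ℝ, β₁'' t + 3 * lam' t * β₁' t = 0)
    (eomβ₂ : ∀ t : ℝ, β₂'' t + 3 * lam' t * β₂' t = 0)
    (eomφ : ∀ t : ℝ, φ'' t + 3 * lam' t * φ' t = 0)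
    (E : ℝ → ℝ)
    (hE : ∀ t : ℝ, E t = exp (3 * lam t) *
      (6 * lam' t ^ 2 - (3 / 2) * (β₁' t ^ 2 + β₂' t ^ 2) - φ' t ^ 2)) :
    ∀ s t : ℝ,
      2 * s * E s - 8 * exp (3 * lam s) * lam' s =
      2 * t * E t - 8 * exp (3 * lam t) * lam' t := by
  obtain rfl : E = BianchiI.hamiltonian lam lam' β₁' β₂' φ' := funext hE
  have hQ (t : ℝ) : HasDerivAt (BianchiI.noetherCharge lam lam' β₁' β₂' φ') 0 t :=
    BianchiI.hasDerivAt_noetherCharge (hlam t) (hlam' t) (hβ₁' t) (hβ₂' t) (hφ' t)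
      (eomlam t) (eomβ₁ t) (eomβ₂ t) (eomφ t)
  exact is_const_of_deriv_eq_zero (fun t => (hQ t).differentiableAt) (fun t => (hQ t).deriv)

/-- for the Bianchi I model with massless scalar field, the Noether
integral of the point symmetry `2t∂_t + Hⁱ` (with `Hⁱ = (2/3)∂_λ` the gradient homothetic
vector of the minisuperspace metric) is conserved: along solutions of the full
Euler–Lagrange equations the quantity `2t·E − 8e^{3λ}·λ̇` is constant, where
`E = e^{3λ}(6λ̇² − (3/2)(β̇₁² + β̇₂²) − φ̇²)` is the Hamiltonian. -/
theorem bianchiI_noether_2tdt_H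
    (lam β₁ β₂ φ lam' β₁' β₂' φ' lam'' β₁'' β₂'' φ'' : ℝ → ℝ)
    (hlam : ∀ t : ℝ, HasDerivAt lam (lam' t) t)
    (hlam' : ∀ t : ℝ, HasDerivAt lam' (lam'' t) t)
    (hβ₁ : ∀ t : ℝ, HasDerivAt β₁ (β₁' t) t)
    (hβ₁' : ∀ t : ℝ, HasDerivAt β₁' (β₁'' t) t)
    (hβ₂ : ∀ t : ℝ, HasDerivAt β₂ (β₂' t) t)
    (hβ₂' : ∀ t : ℝ, HasDerivAt β₂' (β₂'' t) t)
    (hφ : ∀ t : ℝ, HasDerivAt φ (φ' t) t)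
    (hφ' : ∀ t : ℝ, HasDerivAt φ' (φ'' t) t)
    (eomlam : ∀ t : ℝ, lam'' t + (3 / 2) * lam' t ^ 2
      + (3 / 8) * (β₁' t ^ 2 + β₂' t ^ 2) + (1 / 4) * φ' t ^ 2 = 0)
    (eomβ₁ : ∀ t : ℝ, β₁'' t + 3 * lam' t * β₁' t = 0)
    (eomβ₂ : ∀ t : ℝ, β₂'' t + 3 * lam' t * β₂' t = 0)
    (eomφ : ∀ t : ℝ, φ'' t + 3 * lam' t * φ' t = 0)
    (E : ℝ → ℝ)
    (hE : ∀ t : ℝ, E t = exp (3 * lam t) *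
      (6 * lam' t ^ 2 - (3 / 2) * (β₁' t ^ 2 + β₂' t ^ 2) - φ' t ^ 2)) :
    ∀ s t : ℝ,
      2 * s * E s - 8 * exp (3 * lam s) * lam' s =
      2 * t * E t - 8 * exp (3 * lam t) * lam' t :=
  bianchiI_noether_2tdt_H_general lam lam' β₁' β₂' φ' lam'' β₁'' β₂'' φ'' hlam hlam' hβ₁' hβ₂' hφ'
    eomlam eomβ₁ eomβ₂ eomφ E hE
end
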